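/- arXiv:2208.04925 — 7 statements merged into one kernel-verified Lean document; each statement's English description precedes it below -/
import Mathlib

section
/- Let m ≥ 1 and let A be a real skew-symmetric m×m matrix. Then the Frobenius (Hilbert–Schmidt) norm of A² satisfies ‖A²‖_F ≤ (1/√2)·‖A‖_F². -/
open Matrix

/-- The Frobenius (Hilbert–Schmidt) norm of a real square matrix:
`‖M‖_F = √(trace(Mᵀ M))`. -/
noncomputable def frobNorm {m : ℕ} (M : Matrix (Fin m) (Fin m) ℝ) : ℝ :=
  Real.sqrt (Matrix.trace (Mᵀ * M))

/-!
For skew-symmetric `A` the bilinear form `yᵀ A x` only sees the antisymmetric part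
`y xᵀ - x yᵀ` of `y xᵀ`, whose squared Frobenius norm is `2 (|x|²|y|² - (x·y)²)` by Lagrange's
identity. Cauchy–Schwarz then gives `(yᵀ A x)² ≤ ½ ‖A‖_F² |x|² |y|²`, i.e. the operator norm of
`A` is at most `‖A‖_F / √2`. Applying this column by column to `A · A` yields
`‖A²‖_F² ≤ ½ ‖A‖_F⁴`.
-/

open Finset

namespace Matrix

variable {n p : Type*} [Fintype n] [Fintype p]

theorem sum_sum_mul_sub_mul_sq (x y : n → ℝ) :
    ∑ i, ∑ j, (y i * x j - y j * x i) ^ 2 = 2 * ((x ⬝ᵥ x) * (y ⬝ᵥ y) - (x ⬝ᵥ y) ^ 2) := by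
  have hexpand : ∀ i j, (y i * x j - y j * x i) ^ 2
      = x j * x j * (y i * y i) + x i * x i * (y j * y j) - 2 * (x i * y i * (x j * y j)) :=
    fun i j => by ring
  simp only [hexpand, sum_add_distrib, sum_sub_distrib]
  rw [sum_comm (f := fun i j => x j * x j * (y i * y i)), dotProduct, dotProduct, dotProduct, sq,
    sum_mul_sum, sum_mul_sum]
  simp only [← mul_sum]
  ring

theorem dotProduct_mulVec_eq_half_sum_of_transpose_eq_neg {A : Matrix n n ℝ} (hA : Aᵀ = -A)
    (x y : n → ℝ) :
    y ⬝ᵥ A *ᵥ x = (∑ i, ∑ j, A i j * (y i * x j - y j * x i)) / 2 := by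
  have hswap : ∑ i, ∑ j, A i j * (y j * x i) = -∑ i, ∑ j, A i j * (y i * x j) := by
    rw [sum_comm, ← sum_neg_distrib]
    refine sum_congr rfl fun i _ => ?_
    rw [← sum_neg_distrib]
    refine sum_congr rfl fun j _ => ?_
    rw [← transpose_apply A i j, hA, neg_apply, neg_mul]
  have hexpand : y ⬝ᵥ A *ᵥ x = ∑ i, ∑ j, A i j * (y i * x j) := by
    simp only [dotProduct, mulVec, mul_sum]
    exact sum_congr rfl fun i _ => sum_congr rfl fun j _ => by ring
  rw [hexpand]
  simp only [mul_sub, sum_sub_distrib, hswap]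
  ring

theorem sq_dotProduct_mulVec_le_of_transpose_eq_neg {A : Matrix n n ℝ} (hA : Aᵀ = -A)
    (x y : n → ℝ) :
    (y ⬝ᵥ A *ᵥ x) ^ 2 ≤ (∑ i, ∑ j, A i j ^ 2) / 2 * ((x ⬝ᵥ x) * (y ⬝ᵥ y)) := by
  have hCS : (∑ i, ∑ j, A i j * (y i * x j - y j * x i)) ^ 2 ≤
      (∑ i, ∑ j, A i j ^ 2) * ∑ i, ∑ j, (y i * x j - y j * x i) ^ 2 := by
    simpa only [Fintype.sum_prod_type] using
      sum_mul_sq_le_sq_mul_sq (univ : Finset (n × n)) (fun q => A q.1 q.2)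
        (fun q => y q.1 * x q.2 - y q.2 * x q.1)
  rw [sum_sum_mul_sub_mul_sq] at hCS
  rw [dotProduct_mulVec_eq_half_sum_of_transpose_eq_neg hA]
  have hnormA : 0 ≤ ∑ i, ∑ j, A i j ^ 2 := by positivity
  nlinarith [mul_nonneg hnormA (sq_nonneg (x ⬝ᵥ y))]

theorem mulVec_dotProduct_mulVec_le_of_transpose_eq_neg {A : Matrix n n ℝ} (hA : Aᵀ = -A)
    (x : n → ℝ) :
    A *ᵥ x ⬝ᵥ A *ᵥ x ≤ (∑ i, ∑ j, A i j ^ 2) / 2 * (x ⬝ᵥ x) := by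
  have h := sq_dotProduct_mulVec_le_of_transpose_eq_neg hA x (A *ᵥ x)
  have hAx : 0 ≤ A *ᵥ x ⬝ᵥ A *ᵥ x := dotProduct_self_star_nonneg _
  have hK : 0 ≤ (∑ i, ∑ j, A i j ^ 2) / 2 * (x ⬝ᵥ x) := by
    have := dotProduct_self_star_nonneg x
    positivity
  nlinarith

theorem sum_sum_mul_sq_le_of_transpose_eq_neg {A : Matrix n n ℝ} (hA : Aᵀ = -A)
    (M : Matrix n p ℝ) :
    ∑ i, ∑ k, (A * M) i k ^ 2 ≤ (∑ i, ∑ j, A i j ^ 2) / 2 * ∑ i, ∑ k, M i k ^ 2 := by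
  rw [sum_comm, sum_comm (f := fun i k => M i k ^ 2), mul_sum]
  refine sum_le_sum fun k _ => ?_
  calc ∑ i, (A * M) i k ^ 2 = A *ᵥ Mᵀ k ⬝ᵥ A *ᵥ Mᵀ k := by
        simp only [dotProduct, mulVec, mul_apply, transpose_apply, sq]
    _ ≤ (∑ i, ∑ j, A i j ^ 2) / 2 * (Mᵀ k ⬝ᵥ Mᵀ k) :=
        mulVec_dotProduct_mulVec_le_of_transpose_eq_neg hA (Mᵀ k)
    _ = (∑ i, ∑ j, A i j ^ 2) / 2 * ∑ i, M i k ^ 2 := by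
        simp only [dotProduct, transpose_apply, sq]

end Matrix

theorem frobNorm_nonneg {m : ℕ} (M : Matrix (Fin m) (Fin m) ℝ) : 0 ≤ frobNorm M :=
  Real.sqrt_nonneg _

theorem frobNorm_sq {m : ℕ} (M : Matrix (Fin m) (Fin m) ℝ) :
    frobNorm M ^ 2 = ∑ i, ∑ j, M i j ^ 2 := by
  have htrace : (Mᵀ * M).trace = ∑ i, ∑ j, M i j ^ 2 := by
    simp only [trace, Matrix.diag, mul_apply, transpose_apply, sq]
    exact sum_comm
  rw [frobNorm, htrace, Real.sq_sqrt (by positivity)]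

theorem frobNorm_sq_le_of_skew_general {m : ℕ}
    (A : Matrix (Fin m) (Fin m) ℝ) (hA : Aᵀ = -A) :
    frobNorm (A * A) ≤ (1 / Real.sqrt 2) * frobNorm A ^ 2 := by
  refine (pow_le_pow_iff_left₀ (frobNorm_nonneg (A * A)) (by positivity) two_ne_zero).mp ?_
  rw [mul_pow, div_pow, Real.sq_sqrt zero_le_two, frobNorm_sq A, frobNorm_sq (A * A)]
  calc ∑ i, ∑ j, (A * A) i j ^ 2 ≤ (∑ i, ∑ j, A i j ^ 2) / 2 * ∑ i, ∑ j, A i j ^ 2 :=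
        sum_sum_mul_sq_le_of_transpose_eq_neg hA A
    _ = 1 ^ 2 / 2 * (∑ i, ∑ j, A i j ^ 2) ^ 2 := by ring

/-- If `A` is a real skew-symmetric `m × m` matrix (`m ≥ 1`), then
`‖A²‖_F ≤ (1/√2) ‖A‖_F²`. -/
theorem frobNorm_sq_le_of_skew {m : ℕ} (hm : 1 ≤ m)
    (A : Matrix (Fin m) (Fin m) ℝ) (hA : Aᵀ = -A) :
    frobNorm (A * A) ≤ (1 / Real.sqrt 2) * frobNorm A ^ 2 :=
  frobNorm_sq_le_of_skew_general A hA
end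

section
/- Let (V₁, ⟨·,·⟩_h, V₂, B) be a step-two Carnot datum with dim V₁ = m. Then δ = 0 if and only if the datum is nascent H-type, i.e., there exists an inner product g on V₂ such that (J^g_T)² = −‖T‖_g²·id on V₁ for every T ∈ V₂. -/
open scoped RealInnerProductSpace

noncomputable section

variable {V₁ : Type*} [NormedAddCommGroup V₁] [InnerProductSpace ℝ V₁] [FiniteDimensional ℝ V₁]
variable {V₂ : Type*} [AddCommGroup V₂] [Module ℝ V₂] [FiniteDimensional ℝ V₂]

/-- `g` is an inner product (symmetric positive-definite bilinear form) on `V₂`. -/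
structure IsInnerProd (g : V₂ →ₗ[ℝ] V₂ →ₗ[ℝ] ℝ) : Prop where
  symm : ∀ s t : V₂, g s t = g t s
  posdef : ∀ t : V₂, t ≠ 0 → 0 < g t t

/-- The norm `‖t‖_g = √(g t t)` associated to a vertical inner product `g`. -/
def gnorm (g : V₂ →ₗ[ℝ] V₂ →ₗ[ℝ] ℝ) (t : V₂) : ℝ := Real.sqrt (g t t)

/-- The Hilbert–Schmidt norm `‖F‖_HS = √(trace(F* F))` of an endomorphism of the
inner product space `V₁`. -/
def hsNorm (F : V₁ →ₗ[ℝ] V₁) : ℝ :=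
  Real.sqrt (LinearMap.trace ℝ V₁ (LinearMap.adjoint F ∘ₗ F))

/-- `J` is the J-operator of the bracket `B` with respect to the vertical inner product `g`:
`⟨J_T U, V⟩_h = g(B(U,V), T)` for all `U V : V₁`, `T : V₂`. -/
def IsJOp (B : V₁ →ₗ[ℝ] V₁ →ₗ[ℝ] V₂) (g : V₂ →ₗ[ℝ] V₂ →ₗ[ℝ] ℝ)
    (J : V₂ → V₁ →ₗ[ℝ] V₁) : Prop :=
  ∀ (T : V₂) (U V : V₁), ⟪J T U, V⟫ = g (B U V) T

/-- The H-type deviation relative to a fixed vertical inner product `g` with J-operator `J`: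
`δ(g) = (dim V₁)^{-1/2} sup { ‖(J_T)² + id‖_HS : ‖T‖_g = 1 }`. -/
def deltaOf (g : V₂ →ₗ[ℝ] V₂ →ₗ[ℝ] ℝ) (J : V₂ → V₁ →ₗ[ℝ] V₁) : ℝ :=
  (Real.sqrt (Module.finrank ℝ V₁))⁻¹ *
    sSup ((fun T => hsNorm (J T ∘ₗ J T + LinearMap.id)) '' {T : V₂ | gnorm g T = 1})

/-- The H-type deviation of a step-two Carnot datum: the infimum of `δ(g)` over all vertical
inner products `g` on `V₂`. -/
def htypeDeviation (B : V₁ →ₗ[ℝ] V₁ →ₗ[ℝ] V₂) : ℝ :=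
  sInf { d : ℝ | ∃ (g : V₂ →ₗ[ℝ] V₂ →ₗ[ℝ] ℝ) (J : V₂ → V₁ →ₗ[ℝ] V₁),
    IsInnerProd g ∧ IsJOp B g J ∧ d = deltaOf g J }

end

/-!
The J-operators are indexed by covectors: `jOp B φ` is the skew endomorphism with
`⟪jOp B φ U, V⟫ = φ (B U V)`, so that `J^g_T = jOp B (g(·, T))` and `jOp B` does not depend on `g`.

If `δ = 0`, fix `φ` and a vertical inner product `g` with `δ(g) < ε`, and write `φ = g(·, T)`. By
homogeneity, `‖(jOp B φ)² + ‖T‖_g² id‖_HS ≤ √m ε ‖T‖_g²`, so `-id` lies in the closure of the line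
through `(jOp B φ)²`; hence `(jOp B φ)²` is a multiple of the identity, and taking traces of the
skew operator `jOp B φ` identifies the multiple as `-‖jOp B φ‖²_HS / m`. This is minus the square
norm of the inner product `⟪jOp B φ, jOp B ψ⟫_HS / m` on `V₂*`, definite because `B` spans `V₂`,
and the dual inner product on `V₂` is nascent H-type. Conversely, a nascent H-type `g` has
`δ(g) = 0`, and `δ(g) ≥ 0` always.
-/

noncomputable section

open LinearMap

theorem mem_span_singleton_of_forall_exists_norm_add_smul_le {F : Type*} [NormedAddCommGroup F]
    [NormedSpace ℝ F] {x e : F} (he : e ≠ 0) (h : ∀ ε > 0, ∃ s > 0, ‖x + s • e‖ ≤ ε * s) :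
    x ∈ ℝ ∙ e := by
  have hclosure : -e ∈ closure ((ℝ ∙ x : Submodule ℝ F) : Set F) := by
    refine Metric.mem_closure_iff.2 fun ε hε => ?_
    obtain ⟨s, hs, hle⟩ := h (ε / 2) (half_pos hε)
    refine ⟨s⁻¹ • x, Submodule.smul_mem _ _ (Submodule.mem_span_singleton_self x), ?_⟩
    calc dist (-e) (s⁻¹ • x) = ‖s⁻¹ • (x + s • e)‖ := by
          rw [dist_comm, dist_eq_norm, sub_neg_eq_add, smul_add, smul_smul,
            inv_mul_cancel₀ hs.ne', one_smul]
      _ = s⁻¹ * ‖x + s • e‖ := by rw [norm_smul, Real.norm_of_nonneg (inv_nonneg.2 hs.le)]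
      _ ≤ s⁻¹ * (ε / 2 * s) := by gcongr
      _ < ε := by rw [mul_comm, mul_assoc, mul_inv_cancel₀ hs.ne']; linarith
  rw [(ℝ ∙ x).closed_of_finiteDimensional.closure_eq] at hclosure
  obtain ⟨c, hc⟩ := Submodule.mem_span_singleton.1 hclosure
  have hc0 : c ≠ 0 := by rintro rfl; exact he (by simpa using hc.symm)
  refine Submodule.mem_span_singleton.2 ⟨-c⁻¹, ?_⟩
  rw [neg_smul, ← smul_neg, ← hc, smul_smul, inv_mul_cancel₀ hc0, one_smul]

section HilbertSchmidt

variable {E : Type*} [NormedAddCommGroup E] [InnerProductSpace ℝ E] [FiniteDimensional ℝ E]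

theorem trace_adjoint_comp_self_eq_sum {ι : Type*} [Fintype ι] (b : OrthonormalBasis ι ℝ E)
    (F : E →ₗ[ℝ] E) : trace ℝ E (adjoint F ∘ₗ F) = ∑ i, ‖F (b i)‖ ^ 2 := by
  rw [trace_eq_sum_inner _ b]
  congr! 1 with i
  rw [comp_apply, adjoint_inner_right, real_inner_self_eq_norm_sq]

def evalStdOrthonormalBasis :
    (E →ₗ[ℝ] E) →ₗ[ℝ] PiLp 2 (fun _ : Fin (Module.finrank ℝ E) => E) where
  toFun F := WithLp.toLp 2 fun i => F (stdOrthonormalBasis ℝ E i)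
  map_add' _ _ := rfl
  map_smul' _ _ := rfl

theorem hsNorm_eq_norm_evalStdOrthonormalBasis (F : E →ₗ[ℝ] E) :
    hsNorm F = ‖evalStdOrthonormalBasis F‖ := by
  rw [hsNorm, trace_adjoint_comp_self_eq_sum (stdOrthonormalBasis ℝ E), PiLp.norm_eq_of_L2]
  rfl

theorem evalStdOrthonormalBasis_injective :
    Function.Injective (evalStdOrthonormalBasis : (E →ₗ[ℝ] E) →ₗ[ℝ] _) :=
  fun _ _ h => (stdOrthonormalBasis ℝ E).toBasis.ext fun i => congr($h i)

theorem hsNorm_nonneg (F : E →ₗ[ℝ] E) : 0 ≤ hsNorm F := Real.sqrt_nonneg _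

theorem hsNorm_eq_zero_iff {F : E →ₗ[ℝ] E} : hsNorm F = 0 ↔ F = 0 := by
  rw [hsNorm_eq_norm_evalStdOrthonormalBasis, norm_eq_zero,
    ← evalStdOrthonormalBasis_injective.eq_iff, map_zero]

@[simp]
theorem hsNorm_zero : hsNorm (0 : E →ₗ[ℝ] E) = 0 := hsNorm_eq_zero_iff.2 rfl

theorem hsNorm_add_le (F G : E →ₗ[ℝ] E) : hsNorm (F + G) ≤ hsNorm F + hsNorm G := by
  simp only [hsNorm_eq_norm_evalStdOrthonormalBasis, map_add]
  exact norm_add_le _ _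

theorem hsNorm_smul (c : ℝ) (F : E →ₗ[ℝ] E) : hsNorm (c • F) = |c| * hsNorm F := by
  simp only [hsNorm_eq_norm_evalStdOrthonormalBasis, map_smul, norm_smul, Real.norm_eq_abs]

theorem sq_hsNorm (F : E →ₗ[ℝ] E) : hsNorm F ^ 2 = trace ℝ E (adjoint F ∘ₗ F) := by
  rw [hsNorm, Real.sq_sqrt]
  rw [trace_adjoint_comp_self_eq_sum (stdOrthonormalBasis ℝ E)]
  positivity

theorem hsNorm_id : hsNorm (LinearMap.id : E →ₗ[ℝ] E) = √(Module.finrank ℝ E) := by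
  rw [hsNorm, adjoint_id, id_comp, trace_id]

theorem norm_apply_le_hsNorm_mul (F : E →ₗ[ℝ] E) (v : E) : ‖F v‖ ≤ hsNorm F * ‖v‖ := by
  set b := stdOrthonormalBasis ℝ E
  calc ‖F v‖ = ‖∑ i, ⟪b i, v⟫ • F (b i)‖ := by simp_rw [← map_smul, ← map_sum, b.sum_repr']
    _ ≤ ∑ i, |⟪b i, v⟫| * ‖F (b i)‖ := by
        refine (norm_sum_le _ _).trans_eq ?_
        simp_rw [norm_smul, Real.norm_eq_abs]
    _ ≤ √(∑ i, |⟪b i, v⟫| ^ 2) * √(∑ i, ‖F (b i)‖ ^ 2) := Real.sum_mul_le_sqrt_mul_sqrt _ _ _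
    _ = hsNorm F * ‖v‖ := by
        simp_rw [sq_abs, b.sum_sq_inner_right, Real.sqrt_sq (norm_nonneg v), hsNorm,
          trace_adjoint_comp_self_eq_sum b, mul_comm]

theorem hsNorm_comp_le (F G : E →ₗ[ℝ] E) : hsNorm (F ∘ₗ G) ≤ hsNorm F * hsNorm G := by
  set b := stdOrthonormalBasis ℝ E
  have h : hsNorm (F ∘ₗ G) ^ 2 ≤ (hsNorm F * hsNorm G) ^ 2 := by
    rw [mul_pow, sq_hsNorm, sq_hsNorm G, trace_adjoint_comp_self_eq_sum b,
      trace_adjoint_comp_self_eq_sum b, Finset.mul_sum]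
    gcongr with i
    rw [comp_apply, ← mul_pow]
    gcongr
    exact norm_apply_le_hsNorm_mul F (G (b i))
  exact (pow_le_pow_iff_left₀ (hsNorm_nonneg _)
    (mul_nonneg (hsNorm_nonneg F) (hsNorm_nonneg G)) two_ne_zero).1 h

theorem trace_comp_self_of_adjoint_eq_neg {F : E →ₗ[ℝ] E} (hF : adjoint F = -F) :
    trace ℝ E (F ∘ₗ F) = -hsNorm F ^ 2 := by
  rw [sq_hsNorm, hF, neg_comp, map_neg, neg_neg]

theorem exists_eq_smul_id_of_forall_exists_hsNorm_add_smul_id_le (hE : 0 < Module.finrank ℝ E)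
    {F : E →ₗ[ℝ] E} (h : ∀ ε > 0, ∃ s > 0, hsNorm (F + s • LinearMap.id) ≤ ε * s) :
    ∃ c : ℝ, F = c • LinearMap.id := by
  have : Nontrivial E := Module.finrank_pos_iff.1 hE
  have hid : evalStdOrthonormalBasis (LinearMap.id : E →ₗ[ℝ] E) ≠ 0 := by
    rw [Ne, ← map_zero evalStdOrthonormalBasis, evalStdOrthonormalBasis_injective.eq_iff]
    exact one_ne_zero
  obtain ⟨c, hc⟩ := Submodule.mem_span_singleton.1 <|
    mem_span_singleton_of_forall_exists_norm_add_smul_le hid fun ε hε => by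
      simpa only [hsNorm_eq_norm_evalStdOrthonormalBasis, map_add, map_smul] using h ε hε
  exact ⟨c, evalStdOrthonormalBasis_injective (by rw [map_smul, hc])⟩

theorem eq_neg_sq_hsNorm_div_finrank_of_comp_self_eq_smul_id (hE : 0 < Module.finrank ℝ E)
    {F : E →ₗ[ℝ] E} (hF : adjoint F = -F) {c : ℝ} (h : F ∘ₗ F = c • LinearMap.id) :
    c = -(hsNorm F ^ 2 / Module.finrank ℝ E) := by
  have htrace := trace_comp_self_of_adjoint_eq_neg hF
  rw [h, map_smul, trace_id, smul_eq_mul] at htrace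
  field_simp
  linarith

end HilbertSchmidt

section VerticalInnerProduct

variable {W : Type*} [AddCommGroup W] [Module ℝ W]

theorem IsInnerProd.nonneg {g : W →ₗ[ℝ] W →ₗ[ℝ] ℝ} (hg : IsInnerProd g) (t : W) : 0 ≤ g t t := by
  rcases eq_or_ne t 0 with rfl | ht
  · simp
  · exact (hg.posdef t ht).le

theorem IsInnerProd.sq_le {g : W →ₗ[ℝ] W →ₗ[ℝ] ℝ} (hg : IsInnerProd g) (s t : W) :
    g s t ^ 2 ≤ g s s * g t t :=
  BilinForm.apply_sq_le_of_symm g hg.nonneg (isSymm_def.2 hg.symm) s t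

theorem IsInnerProd.nondegenerate {g : W →ₗ[ℝ] W →ₗ[ℝ] ℝ} (hg : IsInnerProd g) :
    g.Nondegenerate := by
  refine ⟨fun s hs => ?_, fun t ht => ?_⟩
  · by_contra h; exact (hg.posdef s h).ne' (hs s)
  · by_contra h; exact (hg.posdef t h).ne' (ht t)

theorem IsInnerProd.exists_flip_eq [FiniteDimensional ℝ W] {g : W →ₗ[ℝ] W →ₗ[ℝ] ℝ}
    (hg : IsInnerProd g) (φ : Module.Dual ℝ W) : ∃ t, g.flip t = φ :=
  ⟨(BilinForm.toDual g hg.nondegenerate).symm φ, LinearMap.ext fun s => by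
    rw [flip_apply, hg.symm, BilinForm.apply_toDual_symm_apply]⟩

theorem gnorm_sq {g : W →ₗ[ℝ] W →ₗ[ℝ] ℝ} (hg : IsInnerProd g) (t : W) : gnorm g t ^ 2 = g t t :=
  Real.sq_sqrt (hg.nonneg t)

theorem IsInnerProd.compl₁₂ {W' : Type*} [AddCommGroup W'] [Module ℝ W']
    {g : W →ₗ[ℝ] W →ₗ[ℝ] ℝ} (hg : IsInnerProd g) {f : W' →ₗ[ℝ] W} (hf : Function.Injective f) :
    IsInnerProd (g.compl₁₂ f f) where
  symm s t := hg.symm (f s) (f t)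
  posdef t ht := hg.posdef (f t) ((map_ne_zero_iff f hf).2 ht)

theorem isInnerProd_innerₗ (E : Type*) [NormedAddCommGroup E] [InnerProductSpace ℝ E] :
    IsInnerProd (innerₗ E) where
  symm s t := real_inner_comm t s
  posdef _ ht := real_inner_self_pos.2 ht

theorem IsInnerProd.smul {W : Type*} [AddCommGroup W] [Module ℝ W] {g : W →ₗ[ℝ] W →ₗ[ℝ] ℝ}
    (hg : IsInnerProd g) {c : ℝ} (hc : 0 < c) : IsInnerProd (c • g) where
  symm s t := by simp [hg.symm s t]
  posdef t ht := mul_pos hc (hg.posdef t ht)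

theorem exists_isInnerProd [FiniteDimensional ℝ W] : ∃ g : W →ₗ[ℝ] W →ₗ[ℝ] ℝ, IsInnerProd g :=
  let e := LinearEquiv.ofFinrankEq W (EuclideanSpace ℝ (Fin (Module.finrank ℝ W))) (by simp)
  ⟨_, (isInnerProd_innerₗ _).compl₁₂ e.injective⟩

theorem IsInnerProd.exists_dual [FiniteDimensional ℝ W]
    {G : Module.Dual ℝ W →ₗ[ℝ] Module.Dual ℝ W →ₗ[ℝ] ℝ} (hG : IsInnerProd G) :
    ∃ g : W →ₗ[ℝ] W →ₗ[ℝ] ℝ, IsInnerProd g ∧ ∀ t, G (g.flip t) (g.flip t) = g t t := by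
  let flat : W ≃ₗ[ℝ] Module.Dual ℝ W :=
    (Module.evalEquiv ℝ W).trans (BilinForm.toDual G hG.nondegenerate).symm
  have hflip : (G.compl₁₂ flat.toLinearMap flat.toLinearMap).flip = flat.toLinearMap := by
    ext t s
    simp [flat, BilinForm.apply_toDual_symm_apply]
  exact ⟨_, hG.compl₁₂ flat.injective, fun t => by rw [hflip]; rfl⟩

end VerticalInnerProduct

section JOperator

variable {V₁ : Type*} [NormedAddCommGroup V₁] [InnerProductSpace ℝ V₁] [FiniteDimensional ℝ V₁]
variable {V₂ : Type*} [AddCommGroup V₂] [Module ℝ V₂]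
variable (B : V₁ →ₗ[ℝ] V₁ →ₗ[ℝ] V₂)

def jOp : Module.Dual ℝ V₂ →ₗ[ℝ] V₁ →ₗ[ℝ] V₁ :=
  LinearMap.mk₂ ℝ
    (fun φ U => ∑ i, φ (B U (stdOrthonormalBasis ℝ V₁ i)) • stdOrthonormalBasis ℝ V₁ i)
    (fun _ _ _ => by simp [add_smul, Finset.sum_add_distrib])
    (fun _ _ _ => by simp [Finset.smul_sum, smul_smul])
    (fun _ _ _ => by simp [add_smul, Finset.sum_add_distrib])
    (fun _ _ _ => by simp [Finset.smul_sum, smul_smul])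

theorem inner_jOp_apply (φ : Module.Dual ℝ V₂) (U V : V₁) : ⟪jOp B φ U, V⟫ = φ (B U V) := by
  conv_rhs => rw [← (stdOrthonormalBasis ℝ V₁).sum_repr' V]
  simp only [jOp, mk₂_apply, sum_inner, real_inner_smul_left, map_sum, map_smul, smul_eq_mul,
    mul_comm]

theorem isJOp_jOp_flip (g : V₂ →ₗ[ℝ] V₂ →ₗ[ℝ] ℝ) : IsJOp B g fun T => jOp B (g.flip T) :=
  fun T U V => by rw [inner_jOp_apply, flip_apply]

theorem IsJOp.eq_jOp {B : V₁ →ₗ[ℝ] V₁ →ₗ[ℝ] V₂} {g : V₂ →ₗ[ℝ] V₂ →ₗ[ℝ] ℝ}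
    {J : V₂ → V₁ →ₗ[ℝ] V₁} (hJ : IsJOp B g J) (T : V₂) : J T = jOp B (g.flip T) :=
  LinearMap.ext fun U => ext_inner_right ℝ fun V => by rw [hJ, inner_jOp_apply, flip_apply]

theorem adjoint_jOp (hAlt : B.IsAlt) (φ : Module.Dual ℝ V₂) :
    adjoint (jOp B φ) = -jOp B φ :=
  LinearMap.ext fun U => ext_inner_right ℝ fun V => by
    rw [adjoint_inner_left, real_inner_comm, inner_jOp_apply, LinearMap.neg_apply, inner_neg_left,
      inner_jOp_apply, ← hAlt.neg, map_neg]

theorem jOp_injective (hSpan : Submodule.span ℝ {t : V₂ | ∃ U V : V₁, B U V = t} = ⊤) :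
    Function.Injective (jOp B) := by
  rw [← ker_eq_bot, Submodule.eq_bot_iff]
  intro φ hφ
  have hker : Submodule.span ℝ {t : V₂ | ∃ U V : V₁, B U V = t} ≤ ker φ := by
    refine Submodule.span_le.2 ?_
    rintro _ ⟨U, V, rfl⟩
    rw [SetLike.mem_coe, mem_ker, ← inner_jOp_apply, mem_ker.1 hφ, LinearMap.zero_apply,
      inner_zero_left]
  rw [hSpan] at hker
  exact LinearMap.ext fun t => mem_ker.1 (hker Submodule.mem_top)

variable {B} {g : V₂ →ₗ[ℝ] V₂ →ₗ[ℝ] ℝ} {J : V₂ → V₁ →ₗ[ℝ] V₁}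

theorem IsJOp.exists_sq_hsNorm_le (hg : IsInnerProd g) (hJ : IsJOp B g J) :
    ∃ C, ∀ T, hsNorm (J T) ^ 2 ≤ C * g T T := by
  set b := stdOrthonormalBasis ℝ V₁
  refine ⟨∑ i, ∑ j, g (B (b i) (b j)) (B (b i) (b j)), fun T => ?_⟩
  rw [sq_hsNorm, trace_adjoint_comp_self_eq_sum b, Finset.sum_mul]
  gcongr with i
  rw [← b.sum_sq_inner_left, Finset.sum_mul]
  gcongr with j
  rw [hJ]
  exact hg.sq_le _ _

-- Without this bound, `sSup` in `deltaOf` would be the junk value `0`.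
theorem IsJOp.bddAbove_hsNorm_comp_self_add_id (hg : IsInnerProd g) (hJ : IsJOp B g J) :
    BddAbove ((fun T => hsNorm (J T ∘ₗ J T + LinearMap.id)) '' {T | gnorm g T = 1}) := by
  obtain ⟨C, hC⟩ := hJ.exists_sq_hsNorm_le hg
  refine ⟨C + √(Module.finrank ℝ V₁), ?_⟩
  rintro _ ⟨T, hT, rfl⟩
  have hTT : g T T = 1 := by rw [← gnorm_sq hg, hT, one_pow]
  calc hsNorm (J T ∘ₗ J T + LinearMap.id)
      ≤ hsNorm (J T) ^ 2 + hsNorm (LinearMap.id : V₁ →ₗ[ℝ] V₁) :=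
        (hsNorm_add_le _ _).trans (by rw [sq]; gcongr; exact hsNorm_comp_le _ _)
    _ ≤ C + √(Module.finrank ℝ V₁) := by
        rw [hsNorm_id]
        gcongr
        simpa [hTT] using hC T

theorem IsJOp.hsNorm_comp_self_add_id_le_deltaOf (hV₁ : 0 < Module.finrank ℝ V₁)
    (hg : IsInnerProd g) (hJ : IsJOp B g J) {T : V₂} (hT : gnorm g T = 1) :
    hsNorm (J T ∘ₗ J T + LinearMap.id) ≤ √(Module.finrank ℝ V₁) * deltaOf g J := by
  rw [deltaOf, ← mul_assoc, mul_inv_cancel₀ (by positivity), one_mul]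
  exact le_csSup (hJ.bddAbove_hsNorm_comp_self_add_id hg) ⟨T, hT, rfl⟩

theorem IsJOp.hsNorm_comp_self_add_smul_id_le (hV₁ : 0 < Module.finrank ℝ V₁)
    (hg : IsInnerProd g) (hJ : IsJOp B g J) (T : V₂) :
    hsNorm (J T ∘ₗ J T + g T T • LinearMap.id) ≤ √(Module.finrank ℝ V₁) * deltaOf g J * g T T := by
  rcases eq_or_ne T 0 with rfl | hT
  · simp [hJ.eq_jOp]
  set r := gnorm g T
  have hr : 0 < r := Real.sqrt_pos.2 (hg.posdef T hT)
  have hunit : gnorm g (r⁻¹ • T) = 1 := by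
    simp only [gnorm, map_smul, LinearMap.smul_apply, smul_eq_mul]
    rw [← gnorm_sq hg T, show r⁻¹ * (r⁻¹ * r ^ 2) = 1 by field_simp, Real.sqrt_one]
  have hscale : J T ∘ₗ J T + g T T • LinearMap.id
      = g T T • (J (r⁻¹ • T) ∘ₗ J (r⁻¹ • T) + LinearMap.id) := by
    rw [hJ.eq_jOp, hJ.eq_jOp, map_smul, map_smul, smul_comp, comp_smul, smul_add, smul_smul,
      smul_smul, ← gnorm_sq hg T, show r ^ 2 * r⁻¹ * r⁻¹ = 1 by field_simp, one_smul]
  rw [hscale, hsNorm_smul, abs_of_nonneg (hg.nonneg T), mul_comm]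
  exact mul_le_mul_of_nonneg_right (hJ.hsNorm_comp_self_add_id_le_deltaOf hV₁ hg hunit)
    (hg.nonneg T)

end JOperator

section Deviation

variable {V₁ : Type*} [NormedAddCommGroup V₁] [InnerProductSpace ℝ V₁] [FiniteDimensional ℝ V₁]
variable {V₂ : Type*} [AddCommGroup V₂] [Module ℝ V₂]

theorem deltaOf_nonneg (g : V₂ →ₗ[ℝ] V₂ →ₗ[ℝ] ℝ) (J : V₂ → V₁ →ₗ[ℝ] V₁) : 0 ≤ deltaOf g J :=
  mul_nonneg (inv_nonneg.2 (Real.sqrt_nonneg _)) <|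
    Real.sSup_nonneg <| by rintro _ ⟨T, -, rfl⟩; exact hsNorm_nonneg _

theorem deltaOf_eq_zero {g : V₂ →ₗ[ℝ] V₂ →ₗ[ℝ] ℝ} {J : V₂ → V₁ →ₗ[ℝ] V₁}
    (hsq : ∀ T, J T ∘ₗ J T = -(gnorm g T ^ 2) • LinearMap.id) : deltaOf g J = 0 := by
  refine le_antisymm (mul_nonpos_of_nonneg_of_nonpos (inv_nonneg.2 (Real.sqrt_nonneg _)) ?_)
    (deltaOf_nonneg g J)
  refine Real.sSup_nonpos ?_
  rintro _ ⟨T, hT, rfl⟩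
  simp [hsq T, show gnorm g T = 1 from hT]

theorem exists_deltaOf_lt [FiniteDimensional ℝ V₂] {B : V₁ →ₗ[ℝ] V₁ →ₗ[ℝ] V₂} {ε : ℝ}
    (h : htypeDeviation B < ε) :
    ∃ (g : V₂ →ₗ[ℝ] V₂ →ₗ[ℝ] ℝ) (J : V₂ → V₁ →ₗ[ℝ] V₁),
      IsInnerProd g ∧ IsJOp B g J ∧ deltaOf g J < ε := by
  obtain ⟨g, hg⟩ := exists_isInnerProd (W := V₂)
  have hne : {d : ℝ | ∃ (g : V₂ →ₗ[ℝ] V₂ →ₗ[ℝ] ℝ) (J : V₂ → V₁ →ₗ[ℝ] V₁),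
      IsInnerProd g ∧ IsJOp B g J ∧ d = deltaOf g J}.Nonempty :=
    ⟨_, g, _, hg, isJOp_jOp_flip B g, rfl⟩
  obtain ⟨_, ⟨g', J, hg', hJ, rfl⟩, hlt⟩ := exists_lt_of_csInf_lt hne h
  exact ⟨g', J, hg', hJ, hlt⟩

variable (B : V₁ →ₗ[ℝ] V₁ →ₗ[ℝ] V₂)

theorem jOp_comp_self_of_htypeDeviation_eq_zero [FiniteDimensional ℝ V₂]
    (hV₁ : 0 < Module.finrank ℝ V₁) (hAlt : B.IsAlt) (hdev : htypeDeviation B = 0)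
    (φ : Module.Dual ℝ V₂) :
    jOp B φ ∘ₗ jOp B φ = -(hsNorm (jOp B φ) ^ 2 / Module.finrank ℝ V₁) • LinearMap.id := by
  rcases eq_or_ne φ 0 with rfl | hφ
  · simp
  have hsqrt : 0 < √(Module.finrank ℝ V₁) := by positivity
  obtain ⟨c, hc⟩ := exists_eq_smul_id_of_forall_exists_hsNorm_add_smul_id_le hV₁
      (F := jOp B φ ∘ₗ jOp B φ) fun ε hε => by
    obtain ⟨g, J, hg, hJ, hlt⟩ :=
      exists_deltaOf_lt (B := B) (ε := ε / √(Module.finrank ℝ V₁)) (by rw [hdev]; positivity)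
    obtain ⟨T, rfl⟩ := hg.exists_flip_eq φ
    have hT : T ≠ 0 := by rintro rfl; exact hφ (map_zero _)
    refine ⟨g T T, hg.posdef T hT, ?_⟩
    calc hsNorm (jOp B (g.flip T) ∘ₗ jOp B (g.flip T) + g T T • LinearMap.id)
        ≤ √(Module.finrank ℝ V₁) * deltaOf g J * g T T := by
          rw [← hJ.eq_jOp]
          exact hJ.hsNorm_comp_self_add_smul_id_le hV₁ hg T
      _ ≤ ε * g T T := by
          rw [lt_div_iff₀' hsqrt] at hlt
          exact mul_le_mul_of_nonneg_right hlt.le (hg.nonneg T)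
  rw [hc, eq_neg_sq_hsNorm_div_finrank_of_comp_self_eq_smul_id hV₁ (adjoint_jOp B hAlt φ) hc]

def dualGram : Module.Dual ℝ V₂ →ₗ[ℝ] Module.Dual ℝ V₂ →ₗ[ℝ] ℝ :=
  (Module.finrank ℝ V₁ : ℝ)⁻¹ •
    (innerₗ _).compl₁₂ (evalStdOrthonormalBasis ∘ₗ jOp B) (evalStdOrthonormalBasis ∘ₗ jOp B)

theorem dualGram_self (φ : Module.Dual ℝ V₂) :
    dualGram B φ φ = hsNorm (jOp B φ) ^ 2 / Module.finrank ℝ V₁ := by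
  simp [dualGram, hsNorm_eq_norm_evalStdOrthonormalBasis, div_eq_inv_mul]

theorem isInnerProd_dualGram (hV₁ : 0 < Module.finrank ℝ V₁)
    (hSpan : Submodule.span ℝ {t : V₂ | ∃ U V : V₁, B U V = t} = ⊤) :
    IsInnerProd (dualGram B) :=
  ((isInnerProd_innerₗ _).compl₁₂
    (evalStdOrthonormalBasis_injective.comp (jOp_injective B hSpan))).smul (by positivity)

theorem exists_nascent_of_htypeDeviation_eq_zero [FiniteDimensional ℝ V₂]
    (hV₁ : 0 < Module.finrank ℝ V₁) (hAlt : B.IsAlt)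
    (hSpan : Submodule.span ℝ {t : V₂ | ∃ U V : V₁, B U V = t} = ⊤)
    (hdev : htypeDeviation B = 0) :
    ∃ (g : V₂ →ₗ[ℝ] V₂ →ₗ[ℝ] ℝ) (J : V₂ → V₁ →ₗ[ℝ] V₁), IsInnerProd g ∧ IsJOp B g J ∧
      ∀ T, J T ∘ₗ J T = -(gnorm g T ^ 2) • LinearMap.id := by
  obtain ⟨g, hg, hdual⟩ := (isInnerProd_dualGram B hV₁ hSpan).exists_dual
  refine ⟨g, fun T => jOp B (g.flip T), hg, isJOp_jOp_flip B g, fun T => ?_⟩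
  rw [jOp_comp_self_of_htypeDeviation_eq_zero B hV₁ hAlt hdev, gnorm_sq hg, ← hdual, dualGram_self]

theorem htypeDeviation_eq_zero_of_nascent
    (h : ∃ (g : V₂ →ₗ[ℝ] V₂ →ₗ[ℝ] ℝ) (J : V₂ → V₁ →ₗ[ℝ] V₁), IsInnerProd g ∧ IsJOp B g J ∧
      ∀ T, J T ∘ₗ J T = -(gnorm g T ^ 2) • LinearMap.id) :
    htypeDeviation B = 0 := by
  obtain ⟨g, J, hg, hJ, hsq⟩ := h
  refine IsLeast.csInf_eq ⟨⟨g, J, hg, hJ, (deltaOf_eq_zero hsq).symm⟩, ?_⟩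
  rintro _ ⟨g', J', -, -, rfl⟩
  exact deltaOf_nonneg g' J'

end Deviation

theorem htypeDeviation_eq_zero_iff_nascent_general
    {V₁ : Type*} [NormedAddCommGroup V₁] [InnerProductSpace ℝ V₁] [FiniteDimensional ℝ V₁]
    {V₂ : Type*} [AddCommGroup V₂] [Module ℝ V₂] [FiniteDimensional ℝ V₂]
    (m : ℕ) (hm : 1 ≤ m) (hdim₁ : Module.finrank ℝ V₁ = m)
    (B : V₁ →ₗ[ℝ] V₁ →ₗ[ℝ] V₂)
    (hAlt : ∀ U : V₁, B U U = 0)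
    (hSpan : Submodule.span ℝ {t : V₂ | ∃ U V : V₁, B U V = t} = ⊤) :
    htypeDeviation B = 0 ↔
      ∃ (g : V₂ →ₗ[ℝ] V₂ →ₗ[ℝ] ℝ) (J : V₂ → V₁ →ₗ[ℝ] V₁),
        IsInnerProd g ∧ IsJOp B g J ∧
        ∀ T : V₂, J T ∘ₗ J T = -(gnorm g T ^ 2) • (LinearMap.id : V₁ →ₗ[ℝ] V₁) := by
  have hV₁ : 0 < Module.finrank ℝ V₁ := hdim₁ ▸ hm
  exact ⟨exists_nascent_of_htypeDeviation_eq_zero B hV₁ hAlt hSpan,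
    htypeDeviation_eq_zero_of_nascent B⟩

/-- A step-two Carnot datum has H-type deviation zero if and only if it is a nascent
H-type group, i.e. there is a vertical inner product `g` on `V₂` with
`(J^g_T)² = −‖T‖_g² id` for every `T ∈ V₂`. -/
theorem htypeDeviation_eq_zero_iff_nascent
    {V₁ : Type*} [NormedAddCommGroup V₁] [InnerProductSpace ℝ V₁] [FiniteDimensional ℝ V₁]
    {V₂ : Type*} [AddCommGroup V₂] [Module ℝ V₂] [FiniteDimensional ℝ V₂]
    (m : ℕ) (hm : 1 ≤ m) (hdim₁ : Module.finrank ℝ V₁ = m)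
    (hdim₂ : 1 ≤ Module.finrank ℝ V₂)
    (B : V₁ →ₗ[ℝ] V₁ →ₗ[ℝ] V₂)
    (hAlt : ∀ U : V₁, B U U = 0)
    (hSpan : Submodule.span ℝ {t : V₂ | ∃ U V : V₁, B U V = t} = ⊤) :
    htypeDeviation B = 0 ↔
      ∃ (g : V₂ →ₗ[ℝ] V₂ →ₗ[ℝ] ℝ) (J : V₂ → V₁ →ₗ[ℝ] V₁),
        IsInnerProd g ∧ IsJOp B g J ∧
        ∀ T : V₂, J T ∘ₗ J T = -(gnorm g T ^ 2) • (LinearMap.id : V₁ →ₗ[ℝ] V₁) :=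
  htypeDeviation_eq_zero_iff_nascent_general m hm hdim₁ B hAlt hSpan

end
end

section
/- Let (V₁, ⟨·,·⟩_h, V₂, B) be a step-two Carnot datum with dim V₁ = m and let g be any inner product on V₂. Then δ(g) ≤ (3√3/2) · sup{ | ‖x‖_h²/N_g(x,t)² − (‖x‖_h⁶ + 16‖J^g_t x‖_h²)/N_g(x,t)⁶ | : (x,t) ∈ V₁ × V₂, (x,t) ≠ (0,0) }. -/
open scoped RealInnerProductSpace

/-!
Fix `T` with `‖T‖_g = 1`. Since `B` is alternating, `J_T` is skew, so `F = J_T² + id` is symmetric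
and `⟪F x, x⟫ = 1 - ‖J_T x‖²` for unit `x`. Evaluating the defect at `(x, sT)` gives
`u (1 - ‖J_T x‖²) / (1 + u)^{3/2}` with `u = 16 s²`; the choice `s = 1/√8`, i.e. `u = 2`, maximises
`u / (1 + u)^{3/2}` at the value `2/(3√3)`. So every eigenvalue of `F` is at most `(3√3/2) sup |defect|`
in absolute value, and `‖F‖_HS ≤ √m` times that. The supremum is finite because
`‖J_t x‖ ≤ C ‖t‖_g ‖x‖` in finite dimension.
-/

namespace IsInnerProd

variable {V₂ : Type*} [AddCommGroup V₂] [Module ℝ V₂] {g : V₂ →ₗ[ℝ] V₂ →ₗ[ℝ] ℝ}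

theorem nonneg_s5 (hg : IsInnerProd g) (t : V₂) : 0 ≤ g t t := by
  rcases eq_or_ne t 0 with rfl | ht
  · simp
  · exact (hg.posdef t ht).le

theorem gnorm_sq (hg : IsInnerProd g) (t : V₂) : gnorm g t ^ 2 = g t t :=
  Real.sq_sqrt (hg.nonneg_s5 t)

theorem exists_norm_le_mul_gnorm [FiniteDimensional ℝ V₂] (hg : IsInnerProd g)
    {E : Type*} [NormedAddCommGroup E] [NormedSpace ℝ E] (L : V₂ →ₗ[ℝ] E) :
    ∃ C, ∀ t, ‖L t‖ ≤ C * gnorm g t := by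
  let core : InnerProductSpace.Core ℝ V₂ :=
    { inner s t := g s t
      conj_inner_symm s t := hg.symm t s
      re_inner_nonneg := hg.nonneg_s5
      add_left s t u := by simp
      smul_left s t r := by simp
      definite t := not_imp_not.mp fun ht => (hg.posdef t ht).ne' }
  -- the norm of this structure is `gnorm g` by definition, which the final `le_opNorm` uses
  let : NormedAddCommGroup V₂ := core.toNormedAddCommGroup
  let : InnerProductSpace ℝ V₂ := .ofCore core.toCore
  exact ⟨‖L.toContinuousLinearMap‖, L.toContinuousLinearMap.le_opNorm⟩

end IsInnerProd

theorem LinearMap.IsSymmetric.hsNorm_le {E : Type*} [NormedAddCommGroup E] [InnerProductSpace ℝ E]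
    [FiniteDimensional ℝ E] {F : E →ₗ[ℝ] E} (hF : F.IsSymmetric) {c : ℝ} (hc0 : 0 ≤ c)
    (hc : ∀ x, ‖x‖ = 1 → |⟪F x, x⟫| ≤ c) :
    hsNorm F ≤ √(Module.finrank ℝ E) * c := by
  let e := hF.eigenvectorBasis rfl
  have hFe : ∀ i, ‖F (e i)‖ ≤ c := fun i => by
    have he : ‖e i‖ = 1 := e.orthonormal.1 i
    have h := hc (e i) he
    rw [hF.apply_eigenvectorBasis, real_inner_smul_left, real_inner_self_eq_norm_sq, he] at h
    rw [hF.apply_eigenvectorBasis, norm_smul, he]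
    simpa using h
  have htrace : LinearMap.trace ℝ E (F.adjoint ∘ₗ F) = ∑ i, ‖F (e i)‖ ^ 2 := by
    rw [LinearMap.trace_eq_sum_inner _ e, hF.adjoint_eq]
    congr! 1 with i
    rw [LinearMap.comp_apply, ← hF, real_inner_self_eq_norm_sq]
  calc hsNorm F = √(∑ i, ‖F (e i)‖ ^ 2) := by rw [hsNorm, htrace]
    _ ≤ √(∑ _i : Fin (Module.finrank ℝ E), c ^ 2) := by gcongr with i; exact hFe i
    _ = √(Module.finrank ℝ E) * c := by simp [Real.sqrt_mul, hc0]

namespace IsJOp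

variable {V₁ : Type*} [NormedAddCommGroup V₁] [InnerProductSpace ℝ V₁]
variable {V₂ : Type*} [AddCommGroup V₂] [Module ℝ V₂]
variable {B : V₁ →ₗ[ℝ] V₁ →ₗ[ℝ] V₂} {g : V₂ →ₗ[ℝ] V₂ →ₗ[ℝ] ℝ} {J : V₂ → V₁ →ₗ[ℝ] V₁}

def toLinearMap (hJ : IsJOp B g J) : V₂ →ₗ[ℝ] V₁ →ₗ[ℝ] V₁ where
  toFun := J
  map_add' S T := by
    ext x
    refine ext_inner_right ℝ fun w => ?_
    rw [LinearMap.add_apply, inner_add_left, hJ, hJ, hJ, map_add]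
  map_smul' c T := by
    ext x
    refine ext_inner_right ℝ fun w => ?_
    rw [LinearMap.smul_apply, RingHom.id_apply, real_inner_smul_left, hJ, hJ, map_smul,
      smul_eq_mul]

theorem smul_apply (hJ : IsJOp B g J) (c : ℝ) (T : V₂) (x : V₁) : J (c • T) x = c • J T x :=
  LinearMap.congr_fun (hJ.toLinearMap.map_smul c T) x

theorem inner_apply_left_eq_neg (hJ : IsJOp B g J) (hB : B.IsAlt) (T : V₂) (u w : V₁) :
    ⟪J T u, w⟫ = -⟪u, J T w⟫ := by
  rw [hJ, real_inner_comm, hJ, ← hB.neg, map_neg, LinearMap.neg_apply]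

theorem isSymmetric_sq_add_id (hJ : IsJOp B g J) (hB : B.IsAlt) (T : V₂) :
    (J T ∘ₗ J T + LinearMap.id).IsSymmetric := fun u w => by
  simp [inner_add_left, inner_add_right, hJ.inner_apply_left_eq_neg hB]

theorem inner_sq_add_id_self (hJ : IsJOp B g J) (hB : B.IsAlt) (T : V₂) (x : V₁) :
    ⟪(J T ∘ₗ J T + LinearMap.id : V₁ →ₗ[ℝ] V₁) x, x⟫ = ‖x‖ ^ 2 - ‖J T x‖ ^ 2 := by
  simp [inner_add_left, hJ.inner_apply_left_eq_neg hB, sub_eq_neg_add]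

theorem exists_norm_apply_le [FiniteDimensional ℝ V₁] [FiniteDimensional ℝ V₂]
    (hJ : IsJOp B g J) (hg : IsInnerProd g) :
    ∃ C, ∀ t x, ‖J t x‖ ≤ C * gnorm g t * ‖x‖ := by
  obtain ⟨C, hC⟩ := hg.exists_norm_le_mul_gnorm
    (LinearMap.toContinuousLinearMap.toLinearMap ∘ₗ hJ.toLinearMap)
  exact ⟨C, fun t x => ((J t).toContinuousLinearMap.le_opNorm x).trans (by gcongr; exact hC t)⟩

end IsJOp

section Kaplan

variable {V₁ : Type*} [NormedAddCommGroup V₁]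
variable {V₂ : Type*} [AddCommGroup V₂] [Module ℝ V₂]
variable {g : V₂ →ₗ[ℝ] V₂ →ₗ[ℝ] ℝ} {N : V₁ → V₂ → ℝ}

noncomputable def eikonalDefect [Module ℝ V₁] (J : V₂ → V₁ →ₗ[ℝ] V₁) (N : V₁ → V₂ → ℝ)
    (x : V₁) (t : V₂) : ℝ :=
  ‖x‖ ^ 2 / N x t ^ 2 - (‖x‖ ^ 6 + 16 * ‖J t x‖ ^ 2) / N x t ^ 6

variable (hN : ∀ x t, N x t = (‖x‖ ^ 4 + 16 * gnorm g t ^ 2) ^ ((1 : ℝ) / 4))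
include hN

theorem kaplan_nonneg (x : V₁) (t : V₂) : 0 ≤ N x t := by
  rw [hN]
  positivity

theorem kaplan_pow_four (x : V₁) (t : V₂) : N x t ^ 4 = ‖x‖ ^ 4 + 16 * gnorm g t ^ 2 := by
  rw [hN, ← Real.rpow_natCast, ← Real.rpow_mul (by positivity)]
  norm_num

theorem sq_norm_le_kaplan_sq (x : V₁) (t : V₂) : ‖x‖ ^ 2 ≤ N x t ^ 2 := by
  refine (pow_le_pow_iff_left₀ (sq_nonneg _) (sq_nonneg _) two_ne_zero).mp ?_
  nlinarith [kaplan_pow_four hN x t, sq_nonneg (gnorm g t)]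

theorem kaplan_pos (hg : IsInnerProd g) {x : V₁} {t : V₂} (hxt : ¬(x = 0 ∧ t = 0)) :
    0 < N x t := by
  refine (kaplan_nonneg hN x t).lt_of_ne' fun h0 => hxt ?_
  have h4 := kaplan_pow_four hN x t
  rw [h0, hg.gnorm_sq] at h4
  have hx : ‖x‖ ^ 4 = 0 := by nlinarith [hg.nonneg_s5 t, pow_nonneg (norm_nonneg x) 4]
  have ht : g t t = 0 := by nlinarith [hg.nonneg_s5 t, pow_nonneg (norm_nonneg x) 4]
  exact ⟨by simpa using hx, not_not.mp fun ht' => (hg.posdef t ht').ne' ht⟩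

theorem abs_eikonalDefect_le [Module ℝ V₁] (hg : IsInnerProd g) {J : V₂ → V₁ →ₗ[ℝ] V₁} {C : ℝ}
    (hC : ∀ t x, ‖J t x‖ ≤ C * gnorm g t * ‖x‖) {x : V₁} {t : V₂} (hxt : ¬(x = 0 ∧ t = 0)) :
    |eikonalDefect J N x t| ≤ 2 + C ^ 2 := by
  have hN0 := kaplan_pos hN hg hxt
  have hx := sq_norm_le_kaplan_sq hN x t
  have ht : 16 * gnorm g t ^ 2 ≤ N x t ^ 4 := by
    rw [kaplan_pow_four hN]
    nlinarith [pow_nonneg (norm_nonneg x) 4]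
  have hJx : 16 * ‖J t x‖ ^ 2 ≤ C ^ 2 * N x t ^ 6 := calc
    16 * ‖J t x‖ ^ 2 ≤ 16 * (C * gnorm g t * ‖x‖) ^ 2 := by gcongr; exact hC t x
    _ = C ^ 2 * (16 * gnorm g t ^ 2) * ‖x‖ ^ 2 := by ring
    _ ≤ C ^ 2 * N x t ^ 4 * N x t ^ 2 := by gcongr
    _ = C ^ 2 * N x t ^ 6 := by ring
  have hx6 : ‖x‖ ^ 6 ≤ N x t ^ 6 := by
    simpa only [← pow_mul] using pow_le_pow_left₀ (sq_nonneg _) hx 3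
  have ha : ‖x‖ ^ 2 / N x t ^ 2 ≤ 1 := div_le_one_of_le₀ hx (by positivity)
  have hb : (‖x‖ ^ 6 + 16 * ‖J t x‖ ^ 2) / N x t ^ 6 ≤ 1 + C ^ 2 := by
    rw [div_le_iff₀ (by positivity)]
    linarith
  rw [eikonalDefect, abs_le]
  constructor <;> nlinarith [div_nonneg (sq_nonneg ‖x‖) (sq_nonneg (N x t)),
    div_nonneg (by positivity : 0 ≤ ‖x‖ ^ 6 + 16 * ‖J t x‖ ^ 2) (pow_nonneg hN0.le 6)]

theorem eikonalDefect_inv_sqrt_eight_smul [InnerProductSpace ℝ V₁] (hg : IsInnerProd g)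
    {B : V₁ →ₗ[ℝ] V₁ →ₗ[ℝ] V₂} {J : V₂ → V₁ →ₗ[ℝ] V₁} (hJ : IsJOp B g J) {x : V₁} {T : V₂}
    (hx : ‖x‖ = 1) (hT : gnorm g T = 1) :
    eikonalDefect J N x ((√8)⁻¹ • T) = 2 / (3 * √3) * (1 - ‖J T x‖ ^ 2) := by
  have h8 : (√8)⁻¹ ^ 2 = (1 / 8 : ℝ) := by rw [inv_pow, Real.sq_sqrt (by norm_num)]; norm_num
  have hgT : gnorm g ((√8)⁻¹ • T) ^ 2 = 1 / 8 := by
    simp only [hg.gnorm_sq, map_smul, LinearMap.smul_apply, smul_eq_mul]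
    rw [← hg.gnorm_sq, hT, ← h8]
    ring
  have hN2 : N x ((√8)⁻¹ • T) ^ 2 = √3 := by
    rw [← Real.sqrt_sq (pow_nonneg (kaplan_nonneg hN _ _) 2), ← pow_mul, kaplan_pow_four hN, hx,
      hgT]
    norm_num
  have hN6 : N x ((√8)⁻¹ • T) ^ 6 = 3 * √3 := by
    rw [show N x ((√8)⁻¹ • T) ^ 6 = (N x ((√8)⁻¹ • T) ^ 2) ^ 3 by ring, hN2, pow_succ,
      Real.sq_sqrt (by norm_num)]
  have hJx : ‖J ((√8)⁻¹ • T) x‖ ^ 2 = ‖J T x‖ ^ 2 / 8 := by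
    rw [hJ.smul_apply, norm_smul, mul_pow, Real.norm_eq_abs, sq_abs, h8]
    ring
  have h3 : √3 ^ 2 = 3 := Real.sq_sqrt (by norm_num)
  rw [eikonalDefect, hN2, hN6, hJx, hx]
  field_simp
  nlinarith [h3]

end Kaplan

theorem deviation_le_eikonal_defect_general
    {V₁ : Type*} [NormedAddCommGroup V₁] [InnerProductSpace ℝ V₁] [FiniteDimensional ℝ V₁]
    {V₂ : Type*} [AddCommGroup V₂] [Module ℝ V₂] [FiniteDimensional ℝ V₂]
    (B : V₁ →ₗ[ℝ] V₁ →ₗ[ℝ] V₂)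
    (hAlt : ∀ U : V₁, B U U = 0)
    (g : V₂ →ₗ[ℝ] V₂ →ₗ[ℝ] ℝ) (hg : IsInnerProd g)
    (J : V₂ → V₁ →ₗ[ℝ] V₁) (hJ : IsJOp B g J)
    (N : V₁ → V₂ → ℝ)
    (hN : ∀ (x : V₁) (t : V₂), N x t = (‖x‖ ^ 4 + 16 * gnorm g t ^ 2) ^ ((1 : ℝ) / 4)) :
    deltaOf g J ≤ (3 * Real.sqrt 3 / 2) *
      sSup { r : ℝ | ∃ (x : V₁) (t : V₂), ¬(x = 0 ∧ t = 0) ∧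
        r = |‖x‖ ^ 2 / N x t ^ 2 - (‖x‖ ^ 6 + 16 * ‖J t x‖ ^ 2) / N x t ^ 6| } := by
  set S := { r : ℝ | ∃ (x : V₁) (t : V₂), ¬(x = 0 ∧ t = 0) ∧ r = |eikonalDefect J N x t| }
  obtain ⟨C, hC⟩ := hJ.exists_norm_apply_le hg
  have hS : BddAbove S := ⟨2 + C ^ 2, by
    rintro _ ⟨x, t, hxt, rfl⟩
    exact abs_eikonalDefect_le hN hg hC hxt⟩
  have hS0 : 0 ≤ sSup S := Real.sSup_nonneg (by rintro _ ⟨x, t, -, rfl⟩; exact abs_nonneg _)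
  have hHS : ∀ T, gnorm g T = 1 → hsNorm (J T ∘ₗ J T + LinearMap.id) ≤
      √(Module.finrank ℝ V₁) * (3 * √3 / 2 * sSup S) := fun T hT => by
    refine (hJ.isSymmetric_sq_add_id hAlt T).hsNorm_le (by positivity) fun x hx => ?_
    have hxt : ¬(x = 0 ∧ (√8)⁻¹ • T = 0) := fun h => by simp [h.1] at hx
    calc |⟪(J T ∘ₗ J T + LinearMap.id : V₁ →ₗ[ℝ] V₁) x, x⟫|
        = 3 * √3 / 2 * |eikonalDefect J N x ((√8)⁻¹ • T)| := by
          rw [hJ.inner_sq_add_id_self hAlt, eikonalDefect_inv_sqrt_eight_smul hN hg hJ hx hT, hx,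
            abs_mul, abs_of_pos (by positivity : (0 : ℝ) < 2 / (3 * √3))]
          field_simp
      _ ≤ 3 * √3 / 2 * sSup S := by gcongr; exact le_csSup hS ⟨x, _, hxt, rfl⟩
  rw [deltaOf]
  calc (√(Module.finrank ℝ V₁))⁻¹ * sSup _
      ≤ (√(Module.finrank ℝ V₁))⁻¹ * (√(Module.finrank ℝ V₁) * (3 * √3 / 2 * sSup S)) := by
        gcongr
        exact Real.sSup_le (by rintro _ ⟨T, hT, rfl⟩; exact hHS T hT) (by positivity)
    _ ≤ 3 * √3 / 2 * sSup S := by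
        rw [← mul_assoc]
        exact mul_le_of_le_one_left (by positivity) inv_mul_le_one

/-- Converse stability estimate: the H-type deviation relative to a vertical inner product
`g` is controlled by the supremum of the eikonal defect of the Kaplan quasinorm:
`δ(g) ≤ (3√3/2) · sup { | ‖x‖²/N² − (‖x‖⁶ + 16 ‖J_t x‖²)/N⁶ | : (x,t) ≠ (0,0) }`. -/
theorem deviation_le_eikonal_defect
    {V₁ : Type*} [NormedAddCommGroup V₁] [InnerProductSpace ℝ V₁] [FiniteDimensional ℝ V₁]
    {V₂ : Type*} [AddCommGroup V₂] [Module ℝ V₂] [FiniteDimensional ℝ V₂]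
    (m : ℕ) (hm : 1 ≤ m) (hdim₁ : Module.finrank ℝ V₁ = m)
    (hdim₂ : 1 ≤ Module.finrank ℝ V₂)
    (B : V₁ →ₗ[ℝ] V₁ →ₗ[ℝ] V₂)
    (hAlt : ∀ U : V₁, B U U = 0)
    (hSpan : Submodule.span ℝ {t : V₂ | ∃ U V : V₁, B U V = t} = ⊤)
    (g : V₂ →ₗ[ℝ] V₂ →ₗ[ℝ] ℝ) (hg : IsInnerProd g)
    (J : V₂ → V₁ →ₗ[ℝ] V₁) (hJ : IsJOp B g J)
    (N : V₁ → V₂ → ℝ)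
    (hN : ∀ (x : V₁) (t : V₂), N x t = (‖x‖ ^ 4 + 16 * gnorm g t ^ 2) ^ ((1 : ℝ) / 4)) :
    deltaOf g J ≤ (3 * Real.sqrt 3 / 2) *
      sSup { r : ℝ | ∃ (x : V₁) (t : V₂), ¬(x = 0 ∧ t = 0) ∧
        r = |‖x‖ ^ 2 / N x t ^ 2 - (‖x‖ ^ 6 + 16 * ‖J t x‖ ^ 2) / N x t ^ 6| } :=
  deviation_le_eikonal_defect_general B hAlt g hg J hJ N hN
end

section
/- Fix n ≥ 1 and a vector b = (b₁,…,bₙ) of positive real numbers. Let V₁ = ℝ^{2n} with its standard inner product, V₂ = ℝ, and let B : V₁ × V₁ → ℝ be the alternating bilinear map B((x,y),(x',y')) = Σ_{j=1}^n b_j (x_j y'_j − y_j x'_j), where (x,y) denotes (x₁,…,xₙ,y₁,…,yₙ). Then the H-type deviation of this step-two Carnot datum equals √(1 − (Σ_{j=1}^n b_j²)² / (n · Σ_{j=1}^n b_j⁴)), and this value equals δ(g^{λ₀}) for the inner product g^{λ₀} on ℝ with unit vector λ₀⁻¹, where λ₀ = ‖b‖₂/‖b‖₄², with ‖b‖_p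 = ((1/n)Σ_j b_j^p)^{1/p}. -/
open scoped RealInnerProductSpace

noncomputable section

open scoped RealInnerProductSpace

namespace HeisAux

/-- The explicit vertical inner product `g(s,t) = c s t` on `ℝ`. -/
def gmap (c : ℝ) : ℝ →ₗ[ℝ] ℝ →ₗ[ℝ] ℝ :=
  LinearMap.mk₂ ℝ (fun s t => c * s * t) (fun _ _ _ => by ring)
    (fun r s t => by simp [smul_eq_mul]; ring) (fun _ _ _ => by ring)
    (fun r s t => by simp [smul_eq_mul]; ring)

@[simp] lemma gmap_apply (c s t : ℝ) : gmap c s t = c * s * t := rfl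

lemma gmap_isInnerProd {c : ℝ} (hc : 0 < c) : IsInnerProd (gmap c) := by
  constructor
  · intro s t; simp [gmap_apply]; ring
  · intro t ht
    have : 0 < t * t := mul_self_pos.mpr ht
    simpa [gmap_apply, mul_assoc] using mul_pos hc this

/-- Every inner product on `ℝ` is of the form `(s,t) ↦ g 1 1 * s * t`. -/
lemma g_eq (g : ℝ →ₗ[ℝ] ℝ →ₗ[ℝ] ℝ) (s t : ℝ) : g s t = g 1 1 * s * t := by
  have h1 : s = s • (1 : ℝ) := by simp
  have h2 : t = t • (1 : ℝ) := by simp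
  rw [h1, h2, show g (s • (1:ℝ)) = s • g 1 from map_smul g s 1, LinearMap.smul_apply,
    show g 1 (t • (1:ℝ)) = t • g 1 1 from map_smul (g 1) t 1]
  simp only [smul_eq_mul, mul_one]
  ring

/-- The explicit J-operator. -/
def jfun (n : ℕ) (b : Fin n → ℝ) (c T : ℝ) :
    EuclideanSpace ℝ (Fin n ⊕ Fin n) →ₗ[ℝ] EuclideanSpace ℝ (Fin n ⊕ Fin n) where
  toFun U := WithLp.toLp 2 (fun i => Sum.elim (fun j => -(c * T * b j * U (Sum.inr j)))
      (fun j => c * T * b j * U (Sum.inl j)) i)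
  map_add' U W := by
    ext i
    cases i with
    | inl j => simp [PiLp.add_apply]; ring
    | inr j => simp [PiLp.add_apply]; ring
  map_smul' r U := by
    ext i
    cases i with
    | inl j => simp [PiLp.smul_apply, smul_eq_mul]; ring
    | inr j => simp [PiLp.smul_apply, smul_eq_mul]; ring

@[simp] lemma jfun_apply_inl (n : ℕ) (b : Fin n → ℝ) (c T : ℝ)
    (U : EuclideanSpace ℝ (Fin n ⊕ Fin n)) (j : Fin n) :
    jfun n b c T U (Sum.inl j) = -(c * T * b j * U (Sum.inr j)) := rfl

@[simp] lemma jfun_apply_inr (n : ℕ) (b : Fin n → ℝ) (c T : ℝ)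
    (U : EuclideanSpace ℝ (Fin n ⊕ Fin n)) (j : Fin n) :
    jfun n b c T U (Sum.inr j) = c * T * b j * U (Sum.inl j) := rfl

variable {n : ℕ} {b : Fin n → ℝ}
variable {B : EuclideanSpace ℝ (Fin n ⊕ Fin n) →ₗ[ℝ] EuclideanSpace ℝ (Fin n ⊕ Fin n) →ₗ[ℝ] ℝ}

lemma jfun_isJOp
    (hB : ∀ u v : EuclideanSpace ℝ (Fin n ⊕ Fin n),
      B u v = ∑ j : Fin n, b j *
        (u (Sum.inl j) * v (Sum.inr j) - u (Sum.inr j) * v (Sum.inl j)))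
    (c : ℝ) : IsJOp B (gmap c) (jfun n b c) := by
  intro T U V
  rw [PiLp.inner_apply, Fintype.sum_sum_type]
  simp only [RCLike.inner_apply, starRingEnd_apply, star_trivial,
    jfun_apply_inl, jfun_apply_inr, gmap_apply, hB U V]
  rw [Finset.mul_sum, Finset.sum_mul, ← Finset.sum_add_distrib]
  exact Finset.sum_congr rfl fun j _ => by ring

/-- Any J-operator for `g = gmap c` agrees with `jfun`. -/
lemma jop_unique
    (hB : ∀ u v : EuclideanSpace ℝ (Fin n ⊕ Fin n),
      B u v = ∑ j : Fin n, b j *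
        (u (Sum.inl j) * v (Sum.inr j) - u (Sum.inr j) * v (Sum.inl j)))
    {g : ℝ →ₗ[ℝ] ℝ →ₗ[ℝ] ℝ} {c : ℝ} (hg : ∀ s t : ℝ, g s t = c * s * t)
    {J : ℝ → EuclideanSpace ℝ (Fin n ⊕ Fin n) →ₗ[ℝ] EuclideanSpace ℝ (Fin n ⊕ Fin n)}
    (hJ : IsJOp B g J) (T : ℝ) (U : EuclideanSpace ℝ (Fin n ⊕ Fin n)) :
    J T U = jfun n b c T U := by
  ext i
  have key : ∀ i, J T U i = c * B U (EuclideanSpace.single i 1) * T := by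
    intro i
    have h := hJ T U (EuclideanSpace.single i 1)
    rw [EuclideanSpace.inner_single_right] at h
    simp only [one_mul, starRingEnd_apply, star_trivial, hg] at h
    exact h
  cases i with
  | inl k =>
    rw [key, hB, jfun_apply_inl]
    simp [EuclideanSpace.single_apply, mul_ite, Finset.sum_ite_eq']
    ring
  | inr k =>
    rw [key, hB, jfun_apply_inr]
    simp [EuclideanSpace.single_apply, mul_ite, Finset.sum_ite_eq']
    ring

lemma trace_diag (e : (Fin n ⊕ Fin n) → ℝ)
    (L : EuclideanSpace ℝ (Fin n ⊕ Fin n) →ₗ[ℝ] EuclideanSpace ℝ (Fin n ⊕ Fin n))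
    (hL : ∀ U i, L U i = e i * U i) :
    LinearMap.trace ℝ _ L = ∑ i, e i := by
  classical
  rw [LinearMap.trace_eq_matrix_trace ℝ (EuclideanSpace.basisFun _ ℝ).toBasis, Matrix.trace]
  refine Finset.sum_congr rfl fun i _ => ?_
  rw [Matrix.diag_apply, LinearMap.toMatrix_apply, OrthonormalBasis.coe_toBasis_repr_apply,
    EuclideanSpace.basisFun_repr, OrthonormalBasis.coe_toBasis, EuclideanSpace.basisFun_apply,
    hL]
  simp [EuclideanSpace.single_apply]

lemma hsNorm_diag (e : (Fin n ⊕ Fin n) → ℝ)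
    (L : EuclideanSpace ℝ (Fin n ⊕ Fin n) →ₗ[ℝ] EuclideanSpace ℝ (Fin n ⊕ Fin n))
    (hL : ∀ U i, L U i = e i * U i) :
    hsNorm L = Real.sqrt (∑ i, (e i) ^ 2) := by
  have hadj : LinearMap.adjoint L = L := by
    refine ((LinearMap.eq_adjoint_iff L L).mpr fun x y => ?_).symm
    rw [PiLp.inner_apply, PiLp.inner_apply]
    refine Finset.sum_congr rfl fun i _ => ?_
    simp only [RCLike.inner_apply, starRingEnd_apply, star_trivial, hL]
    ring
  have hLL : ∀ U i, (L ∘ₗ L) U i = (fun i => e i * e i) i * U i := by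
    intro U i
    simp only [LinearMap.comp_apply, hL]
    ring
  rw [hsNorm, hadj, trace_diag _ _ hLL]
  congr 1
  exact Finset.sum_congr rfl fun i _ => (sq (e i)).symm ▸ (pow_two (e i)).symm

lemma delta_eq (hn : 1 ≤ n)
    (hB : ∀ u v : EuclideanSpace ℝ (Fin n ⊕ Fin n),
      B u v = ∑ j : Fin n, b j *
        (u (Sum.inl j) * v (Sum.inr j) - u (Sum.inr j) * v (Sum.inl j)))
    {g : ℝ →ₗ[ℝ] ℝ →ₗ[ℝ] ℝ} {c : ℝ} (hc : 0 < c) (hg : ∀ s t : ℝ, g s t = c * s * t)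
    {J : ℝ → EuclideanSpace ℝ (Fin n ⊕ Fin n) →ₗ[ℝ] EuclideanSpace ℝ (Fin n ⊕ Fin n)}
    (hJ : IsJOp B g J) :
    deltaOf g J = Real.sqrt ((∑ j, (1 - c * b j ^ 2) ^ 2) / n) := by
  classical
  set v : ℝ := Real.sqrt (2 * ∑ j, (1 - c * b j ^ 2) ^ 2) with hv
  have hmem : ∀ T : ℝ, gnorm g T = 1 ↔ c * T ^ 2 = 1 := by
    intro T
    rw [gnorm, hg, Real.sqrt_eq_one]
    constructor <;> intro h <;> nlinarith
  have key : ∀ T : ℝ, gnorm g T = 1 →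
      hsNorm (J T ∘ₗ J T + LinearMap.id) = v := by
    intro T hT
    rw [hmem] at hT
    have hct : (c * T * c * T) = c := by nlinarith
    set e : (Fin n ⊕ Fin n) → ℝ :=
      fun i => 1 - c * (b (Sum.elim id id i)) ^ 2 with he
    set F : EuclideanSpace ℝ (Fin n ⊕ Fin n) →ₗ[ℝ] EuclideanSpace ℝ (Fin n ⊕ Fin n) :=
      J T ∘ₗ J T + LinearMap.id with hF
    have hdiag : ∀ (U : EuclideanSpace ℝ (Fin n ⊕ Fin n)) (i : Fin n ⊕ Fin n),
        F U i = e i * U i := by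
      intro U i
      have h1 : F U = J T (J T U) + U := rfl
      rw [h1, PiLp.add_apply, jop_unique hB hg hJ, jop_unique hB hg hJ]
      cases i with
      | inl j =>
        simp only [jfun_apply_inl, jfun_apply_inr, he, Sum.elim_inl, id]
        linear_combination (-(b j ^ 2 * U (Sum.inl j))) * hct
      | inr j =>
        simp only [jfun_apply_inr, jfun_apply_inl, he, Sum.elim_inr, id]
        linear_combination (-(b j ^ 2 * U (Sum.inr j))) * hct
    rw [hsNorm_diag e _ hdiag, hv]
    congr 1
    rw [Fintype.sum_sum_type]
    simp only [he, Sum.elim_inl, Sum.elim_inr, id]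
    ring
  have hvmem : (Real.sqrt c)⁻¹ ∈ {T : ℝ | gnorm g T = 1} := by
    rw [Set.mem_setOf_eq, hmem]
    rw [inv_pow, Real.sq_sqrt hc.le]
    field_simp
  have himg : (fun T => hsNorm (J T ∘ₗ J T + LinearMap.id)) '' {T : ℝ | gnorm g T = 1}
      = {v} := by
    refine Set.eq_singleton_iff_unique_mem.mpr ⟨⟨_, hvmem, key _ hvmem⟩, ?_⟩
    rintro y ⟨T, hT, rfl⟩
    exact key T hT
  rw [deltaOf, himg, csSup_singleton, finrank_euclideanSpace, hv]
  have hcard : (Fintype.card (Fin n ⊕ Fin n) : ℝ) = 2 * n := by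
    simp [Fintype.card_sum]
    ring
  rw [hcard, ← Real.sqrt_inv, ← Real.sqrt_mul (by positivity)]
  congr 1
  have hn0 : (n : ℝ) ≠ 0 := by positivity
  field_simp

end HeisAux

/-- H-type deviation of the anisotropic Heisenberg group `Heis^n(b)`:
with `S2 = Σ bⱼ²` and `S4 = Σ bⱼ⁴`, `δ = √(1 − S2²/(n S4))`, and the infimum is attained
by the vertical inner product `g^{λ₀}` on `ℝ` given by `g(s,t) = λ₀² s t` with
`λ₀² = S2/S4` (i.e. `λ₀ = ‖b‖₂/‖b‖₄²`). -/
theorem htypeDeviation_anisotropic_Heisenberg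
    (n : ℕ) (hn : 1 ≤ n) (b : Fin n → ℝ) (hb : ∀ j, 0 < b j)
    (B : EuclideanSpace ℝ (Fin n ⊕ Fin n) →ₗ[ℝ] EuclideanSpace ℝ (Fin n ⊕ Fin n) →ₗ[ℝ] ℝ)
    (hB : ∀ u v : EuclideanSpace ℝ (Fin n ⊕ Fin n),
      B u v = ∑ j : Fin n, b j *
        (u (Sum.inl j) * v (Sum.inr j) - u (Sum.inr j) * v (Sum.inl j))) :
    htypeDeviation B =
      Real.sqrt (1 - (∑ j, b j ^ 2) ^ 2 / ((n : ℝ) * ∑ j, b j ^ 4)) ∧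
    ∃ (g : ℝ →ₗ[ℝ] ℝ →ₗ[ℝ] ℝ) (J : ℝ → EuclideanSpace ℝ (Fin n ⊕ Fin n) →ₗ[ℝ]
        EuclideanSpace ℝ (Fin n ⊕ Fin n)),
      IsInnerProd g ∧ IsJOp B g J ∧
      (∀ s t : ℝ, g s t = ((∑ j, b j ^ 2) / (∑ j, b j ^ 4)) * s * t) ∧
      deltaOf g J = htypeDeviation B := by
  classical
  set S2 := ∑ j, b j ^ 2 with hS2def
  set S4 := ∑ j, b j ^ 4 with hS4def
  have hnpos : (0:ℝ) < n := by
    have : 0 < n := hn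
    exact_mod_cast this
  haveI : Nonempty (Fin n) := ⟨⟨0, hn⟩⟩
  have hS2 : 0 < S2 := Finset.sum_pos (fun j _ => by have := hb j; positivity) Finset.univ_nonempty
  have hS4 : 0 < S4 := Finset.sum_pos (fun j _ => by have := hb j; positivity) Finset.univ_nonempty
  set c₀ : ℝ := S2 / S4 with hc0def
  have hc0 : 0 < c₀ := div_pos hS2 hS4
  have hE : ∀ c : ℝ, (∑ j, (1 - c * b j ^ 2) ^ 2) = n - 2*c*S2 + c^2*S4 := by
    intro c
    have h : ∀ j : Fin n, (1 - c * b j ^ 2) ^ 2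
        = 1 - (2*c)*(b j^2) + (c^2)*(b j^4) := fun j => by ring
    rw [Finset.sum_congr rfl fun j _ => h j, Finset.sum_add_distrib, Finset.sum_sub_distrib,
      ← Finset.mul_sum, ← Finset.mul_sum, Finset.sum_const, Finset.card_univ, Fintype.card_fin,
      nsmul_eq_mul, mul_one, ← hS2def, ← hS4def]
  have hkey : (∑ j, (1 - c₀ * b j ^ 2) ^ 2) / n = 1 - S2^2/((n:ℝ)*S4) := by
    rw [hE, hc0def]
    field_simp
    ring
  have hlow : ∀ c : ℝ, 1 - S2^2/((n:ℝ)*S4) ≤ (∑ j, (1 - c * b j ^ 2) ^ 2) / n := by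
    intro c
    rw [hE]
    have hdiff : ((n:ℝ) - 2*c*S2 + c^2*S4)/n - (1 - S2^2/((n:ℝ)*S4))
        = (c*S4 - S2)^2 / ((n:ℝ)*S4) := by
      field_simp
      ring
    have hpos : 0 ≤ (c*S4 - S2)^2 / ((n:ℝ)*S4) := by positivity
    linarith
  set δ : ℝ := Real.sqrt (1 - S2^2/((n:ℝ)*S4)) with hδ
  have hmemδ : δ ∈ {d : ℝ | ∃ g J, IsInnerProd g ∧ IsJOp B g J ∧ d = deltaOf g J} :=
    ⟨HeisAux.gmap c₀, HeisAux.jfun n b c₀, HeisAux.gmap_isInnerProd hc0,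
      HeisAux.jfun_isJOp hB c₀, by
        rw [HeisAux.delta_eq hn hB hc0 (fun s t => rfl) (HeisAux.jfun_isJOp hB c₀), hkey]⟩
  have hlb : ∀ d ∈ {d : ℝ | ∃ g J, IsInnerProd g ∧ IsJOp B g J ∧ d = deltaOf g J}, δ ≤ d := by
    rintro d ⟨g, J, hg, hJ, rfl⟩
    have hc : 0 < g 1 1 := hg.posdef 1 one_ne_zero
    rw [HeisAux.delta_eq hn hB hc (fun s t => HeisAux.g_eq g s t) hJ]
    exact Real.sqrt_le_sqrt (hlow _)
  have h1 : htypeDeviation B = δ := by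
    rw [htypeDeviation]
    exact le_antisymm (csInf_le ⟨δ, hlb⟩ hmemδ) (le_csInf ⟨δ, hmemδ⟩ hlb)
  refine ⟨h1, HeisAux.gmap c₀, HeisAux.jfun n b c₀, HeisAux.gmap_isInnerProd hc0,
    HeisAux.jfun_isJOp hB c₀, fun s t => rfl, ?_⟩
  rw [h1, HeisAux.delta_eq hn hB hc0 (fun s t => rfl) (HeisAux.jfun_isJOp hB c₀), hkey]


end
end

section
/- Fix n ≥ 1 and a vector b = (b₁,…,bₙ) of positive real numbers. Let V₁ = ℝ^{2n} with its standard inner product, V₂ = ℝ, and let B : V₁ × V₁ → ℝ be the alternating bilinear map B((x,y),(x',y')) = Σ_{j=1}^n b_j (x_j y'_j − y_j x'_j). Then this step-two Carnot datum is nascent H-type (equivalently, its H-type deviation δ is zero) if and only if b₁ = b₂ = ⋯ = bₙ. -/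
open scoped RealInnerProductSpace

/-! Every inner product on `ℝ` is `g s t = c * s * t` with `c > 0`. Hence if `B u v = ⟪J₀ u, v⟫`,
the J-operator is forced to be `J_T = (c T) • J₀`, and `J_T² = -(c T²) • id` for all `T` says exactly
that `J₀² = -c⁻¹ • id`. For the anisotropic bracket, `J₀` rotates each plane `(x_j, y_j)` by a right
angle and scales it by `b_j`, so `J₀² = -diag(b_j²)`: a negative multiple of the identity iff all
the `b_j²` coincide. -/

lemma LinearMap.apply_apply_eq_of_real (g : ℝ →ₗ[ℝ] ℝ →ₗ[ℝ] ℝ) (s t : ℝ) :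
    g s t = g 1 1 * (s * t) :=
  calc g s t = g (s • 1) (t • 1) := by simp
    _ = g 1 1 * (s * t) := by
      rw [map_smul, map_smul, LinearMap.smul_apply, smul_eq_mul, smul_eq_mul]; ring

lemma gnorm_sq_of_real {g : ℝ →ₗ[ℝ] ℝ →ₗ[ℝ] ℝ} (hg : 0 ≤ g 1 1) (T : ℝ) :
    gnorm g T ^ 2 = g 1 1 * T ^ 2 := by
  rw [gnorm, g.apply_apply_eq_of_real, Real.sq_sqrt (mul_nonneg hg (mul_self_nonneg T)), sq]

section OneDimensionalCentre

variable {V : Type*} [NormedAddCommGroup V] [InnerProductSpace ℝ V]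

lemma isJOp_iff_eq_smul {B : V →ₗ[ℝ] V →ₗ[ℝ] ℝ} {J₀ : V →ₗ[ℝ] V}
    (hB : ∀ u v, B u v = ⟪J₀ u, v⟫) (g : ℝ →ₗ[ℝ] ℝ →ₗ[ℝ] ℝ) (J : ℝ → V →ₗ[ℝ] V) :
    IsJOp B g J ↔ J = fun T => (g 1 1 * T) • J₀ := by
  have hg : ∀ u v T, g (B u v) T = ⟪((g 1 1 * T) • J₀) u, v⟫ := fun u v T => by
    rw [g.apply_apply_eq_of_real, hB, LinearMap.smul_apply, real_inner_smul_left]; ring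
  simp only [IsJOp, hg]
  refine ⟨fun hJ => ?_, fun hJ T u v => by rw [hJ]⟩
  funext T
  ext u : 1
  exact ext_inner_right ℝ (hJ T u)

theorem nascent_iff_exists_comp_self_eq_neg_smul_id {B : V →ₗ[ℝ] V →ₗ[ℝ] ℝ} {J₀ : V →ₗ[ℝ] V}
    (hB : ∀ u v, B u v = ⟪J₀ u, v⟫) :
    (∃ (g : ℝ →ₗ[ℝ] ℝ →ₗ[ℝ] ℝ) (J : ℝ → V →ₗ[ℝ] V), IsInnerProd g ∧ IsJOp B g J ∧
      ∀ T : ℝ, J T ∘ₗ J T = -(gnorm g T ^ 2) • (LinearMap.id : V →ₗ[ℝ] V)) ↔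
    ∃ r : ℝ, 0 < r ∧ J₀ ∘ₗ J₀ = -r • LinearMap.id := by
  simp only [isJOp_iff_eq_smul hB]
  constructor
  · rintro ⟨g, _, hg, rfl, hsq⟩
    have hc : 0 < g 1 1 := hg.posdef 1 one_ne_zero
    refine ⟨(g 1 1)⁻¹, inv_pos.2 hc, ?_⟩
    have h1 := hsq 1
    rw [LinearMap.smul_comp, LinearMap.comp_smul, smul_smul, gnorm_sq_of_real hc.le, mul_one,
      one_pow, mul_one] at h1
    calc J₀ ∘ₗ J₀ = (g 1 1 * g 1 1)⁻¹ • ((g 1 1 * g 1 1) • J₀ ∘ₗ J₀) := by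
          rw [inv_smul_smul₀ (by positivity)]
      _ = -(g 1 1)⁻¹ • LinearMap.id := by
          rw [h1, smul_smul]
          congr 1
          field_simp
  · rintro ⟨r, hr, hJ₀⟩
    have hg : 0 < (r⁻¹ • LinearMap.mul ℝ ℝ) 1 1 := by simpa using hr
    refine ⟨r⁻¹ • LinearMap.mul ℝ ℝ, _, ⟨fun s t => ?_, fun t ht => ?_⟩, rfl, fun T => ?_⟩
    · simp [mul_comm]
    · simpa using mul_pos (inv_pos.2 hr) (mul_self_pos.2 ht)
    · rw [LinearMap.smul_comp, LinearMap.comp_smul, smul_smul, hJ₀, smul_smul,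
        gnorm_sq_of_real hg.le]
      congr 1
      simp only [LinearMap.smul_apply, LinearMap.mul_apply', smul_eq_mul, mul_one]
      field_simp

end OneDimensionalCentre

section Anisotropic

variable {ι : Type*} (b : ι → ℝ)

def anisotropicJ : EuclideanSpace ℝ (ι ⊕ ι) →ₗ[ℝ] EuclideanSpace ℝ (ι ⊕ ι) where
  toFun u := WithLp.toLp 2 (Sum.elim (fun j => -(b j * u (.inr j))) (fun j => b j * u (.inl j)))
  map_add' u v := by ext (j | j) <;> simp <;> ring
  map_smul' r u := by ext (j | j) <;> simp <;> ring

@[simp] lemma anisotropicJ_apply_inl (u : EuclideanSpace ℝ (ι ⊕ ι)) (j : ι) :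
    anisotropicJ b u (.inl j) = -(b j * u (.inr j)) := rfl

@[simp] lemma anisotropicJ_apply_inr (u : EuclideanSpace ℝ (ι ⊕ ι)) (j : ι) :
    anisotropicJ b u (.inr j) = b j * u (.inl j) := rfl

lemma inner_anisotropicJ [Fintype ι] (u v : EuclideanSpace ℝ (ι ⊕ ι)) :
    ⟪anisotropicJ b u, v⟫ = ∑ j, b j * (u (.inl j) * v (.inr j) - u (.inr j) * v (.inl j)) := by
  simp only [PiLp.inner_apply, Fintype.sum_sum_type, anisotropicJ_apply_inl,
    anisotropicJ_apply_inr, ← Finset.sum_add_distrib, RCLike.inner_apply, conj_trivial]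
  exact Finset.sum_congr rfl fun j _ => by ring

lemma anisotropicJ_comp_self_eq_neg_smul_id_iff (r : ℝ) :
    anisotropicJ b ∘ₗ anisotropicJ b = -r • LinearMap.id ↔ ∀ j, b j ^ 2 = r := by
  classical
  constructor
  · intro h j
    simpa [sq] using congr($h (EuclideanSpace.single (.inl j) 1) (.inl j))
  · intro h
    ext u (j | j) <;> simp [← h j] <;> ring

end Anisotropic

lemma exists_pos_forall_sq_eq_iff {ι : Type*} {b : ι → ℝ} (hb : ∀ j, 0 < b j) :
    (∃ r : ℝ, 0 < r ∧ ∀ j, b j ^ 2 = r) ↔ ∀ i j, b i = b j := by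
  constructor
  · rintro ⟨r, -, h⟩ i j
    exact (sq_eq_sq₀ (hb i).le (hb j).le).1 ((h i).trans (h j).symm)
  · intro h
    rcases isEmpty_or_nonempty ι with hι | ⟨⟨i₀⟩⟩
    · exact ⟨1, one_pos, isEmptyElim⟩
    · exact ⟨b i₀ ^ 2, pow_pos (hb i₀) 2, fun j => by rw [h j i₀]⟩

theorem anisotropic_Heisenberg_nascent_iff_const_general
    (n : ℕ) (b : Fin n → ℝ) (hb : ∀ j, 0 < b j)
    (B : EuclideanSpace ℝ (Fin n ⊕ Fin n) →ₗ[ℝ] EuclideanSpace ℝ (Fin n ⊕ Fin n) →ₗ[ℝ] ℝ)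
    (hB : ∀ u v : EuclideanSpace ℝ (Fin n ⊕ Fin n),
      B u v = ∑ j : Fin n, b j *
        (u (Sum.inl j) * v (Sum.inr j) - u (Sum.inr j) * v (Sum.inl j))) :
    (∃ (g : ℝ →ₗ[ℝ] ℝ →ₗ[ℝ] ℝ) (J : ℝ → EuclideanSpace ℝ (Fin n ⊕ Fin n) →ₗ[ℝ]
        EuclideanSpace ℝ (Fin n ⊕ Fin n)),
      IsInnerProd g ∧ IsJOp B g J ∧
      ∀ T : ℝ, J T ∘ₗ J T = -(gnorm g T ^ 2) •
        (LinearMap.id : EuclideanSpace ℝ (Fin n ⊕ Fin n) →ₗ[ℝ]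
          EuclideanSpace ℝ (Fin n ⊕ Fin n))) ↔
    ∀ i j : Fin n, b i = b j := by
  rw [nascent_iff_exists_comp_self_eq_neg_smul_id (J₀ := anisotropicJ b) fun u v => by
    rw [hB, inner_anisotropicJ]]
  simp only [anisotropicJ_comp_self_eq_neg_smul_id_iff]
  exact exists_pos_forall_sq_eq_iff hb

/-- The anisotropic Heisenberg group `Heis^n(b)` is a nascent H-type group if and only if
the vector `b` is constant: `b₁ = b₂ = ⋯ = bₙ`. -/
theorem anisotropic_Heisenberg_nascent_iff_const
    (n : ℕ) (hn : 1 ≤ n) (b : Fin n → ℝ) (hb : ∀ j, 0 < b j)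
    (B : EuclideanSpace ℝ (Fin n ⊕ Fin n) →ₗ[ℝ] EuclideanSpace ℝ (Fin n ⊕ Fin n) →ₗ[ℝ] ℝ)
    (hB : ∀ u v : EuclideanSpace ℝ (Fin n ⊕ Fin n),
      B u v = ∑ j : Fin n, b j *
        (u (Sum.inl j) * v (Sum.inr j) - u (Sum.inr j) * v (Sum.inl j))) :
    (∃ (g : ℝ →ₗ[ℝ] ℝ →ₗ[ℝ] ℝ) (J : ℝ → EuclideanSpace ℝ (Fin n ⊕ Fin n) →ₗ[ℝ]
        EuclideanSpace ℝ (Fin n ⊕ Fin n)),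
      IsInnerProd g ∧ IsJOp B g J ∧
      ∀ T : ℝ, J T ∘ₗ J T = -(gnorm g T ^ 2) •
        (LinearMap.id : EuclideanSpace ℝ (Fin n ⊕ Fin n) →ₗ[ℝ]
          EuclideanSpace ℝ (Fin n ⊕ Fin n))) ↔
    ∀ i j : Fin n, b i = b j :=
  anisotropic_Heisenberg_nascent_iff_const_general n b hb B hB
end

section
/- Let m ≥ 2 and let A be a real skew-symmetric m×m matrix with ‖A‖_F² = 2. Then ‖A² + I‖_F² ≤ m − 2, where I is the m×m identity matrix. -/
open Matrix

section aux

variable {m : ℕ}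

private lemma sum4_perm (F : Fin m → Fin m → Fin m → Fin m → ℝ) :
    ∑ i, ∑ j, ∑ k, ∑ l, F i j k l = ∑ k, ∑ l, ∑ i, ∑ j, F i j k l := by
  calc ∑ i, ∑ j, ∑ k, ∑ l, F i j k l
      = ∑ i, ∑ k, ∑ j, ∑ l, F i j k l :=
        Finset.sum_congr rfl fun i _ => Finset.sum_comm
    _ = ∑ i, ∑ k, ∑ l, ∑ j, F i j k l :=
        Finset.sum_congr rfl fun i _ => Finset.sum_congr rfl fun k _ => Finset.sum_comm
    _ = ∑ k, ∑ i, ∑ l, ∑ j, F i j k l := Finset.sum_comm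
    _ = ∑ k, ∑ l, ∑ i, ∑ j, F i j k l :=
        Finset.sum_congr rfl fun k _ => Finset.sum_comm

/-- separable: groups (i,j) and (k,l) -/
private lemma sep0 (f g : Fin m → Fin m → ℝ) :
    ∑ i, ∑ j, ∑ k, ∑ l, f i j * g k l = (∑ i, ∑ j, f i j) * (∑ k, ∑ l, g k l) := by
  simp only [← Finset.mul_sum, ← Finset.sum_mul]

/-- separable: groups (i,k) and (j,l) -/
private lemma sep1 (f g : Fin m → Fin m → ℝ) :
    ∑ i, ∑ j, ∑ k, ∑ l, f i k * g j l = (∑ i, ∑ k, f i k) * (∑ j, ∑ l, g j l) := by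
  calc ∑ i, ∑ j, ∑ k, ∑ l, f i k * g j l
      = ∑ i, ∑ k, ∑ j, ∑ l, f i k * g j l :=
        Finset.sum_congr rfl fun i _ => Finset.sum_comm
    _ = _ := by simp only [← Finset.mul_sum, ← Finset.sum_mul]

/-- separable: groups (i,l) and (j,k) -/
private lemma sep2 (f g : Fin m → Fin m → ℝ) :
    ∑ i, ∑ j, ∑ k, ∑ l, f i l * g j k = (∑ i, ∑ l, f i l) * (∑ j, ∑ k, g j k) := by
  calc ∑ i, ∑ j, ∑ k, ∑ l, f i l * g j k
      = ∑ i, ∑ j, ∑ l, ∑ k, f i l * g j k :=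
        Finset.sum_congr rfl fun i _ => Finset.sum_congr rfl fun j _ => Finset.sum_comm
    _ = ∑ i, ∑ l, ∑ j, ∑ k, f i l * g j k :=
        Finset.sum_congr rfl fun i _ => Finset.sum_comm
    _ = _ := by simp only [← Finset.mul_sum, ← Finset.sum_mul]

/-- contraction over i and j against common (k,l) indices -/
private lemma sep3 (h h' : Fin m → Fin m → Fin m → ℝ) :
    ∑ i, ∑ j, ∑ k, ∑ l, h i k l * h' j k l
      = ∑ k, ∑ l, (∑ i, h i k l) * (∑ j, h' j k l) := by
  rw [sum4_perm]
  exact Finset.sum_congr rfl fun k _ => Finset.sum_congr rfl fun l _ =>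
    (Finset.sum_mul_sum _ _ _ _).symm

/-- contraction: u depends on (i,j,k), v on (j,k,l) -/
private lemma sep4 (u v : Fin m → Fin m → Fin m → ℝ) :
    ∑ i, ∑ j, ∑ k, ∑ l, u i j k * v j k l
      = ∑ j, ∑ k, (∑ i, u i j k) * (∑ l, v j k l) := by
  calc ∑ i, ∑ j, ∑ k, ∑ l, u i j k * v j k l
      = ∑ i, ∑ j, ∑ k, u i j k * ∑ l, v j k l := by
        refine Finset.sum_congr rfl fun i _ => Finset.sum_congr rfl fun j _ =>
          Finset.sum_congr rfl fun k _ => (Finset.mul_sum _ _ _).symm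
    _ = ∑ j, ∑ i, ∑ k, u i j k * ∑ l, v j k l := Finset.sum_comm
    _ = ∑ j, ∑ k, ∑ i, u i j k * ∑ l, v j k l :=
        Finset.sum_congr rfl fun j _ => Finset.sum_comm
    _ = _ := Finset.sum_congr rfl fun j _ => Finset.sum_congr rfl fun k _ =>
        (Finset.sum_mul _ _ _).symm

/-- contraction: u depends on (i,j,l), v on (j,k,l) -/
private lemma sep5 (u v : Fin m → Fin m → Fin m → ℝ) :
    ∑ i, ∑ j, ∑ k, ∑ l, u i j l * v j k l
      = ∑ j, ∑ l, (∑ i, u i j l) * (∑ k, v j k l) := by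
  calc ∑ i, ∑ j, ∑ k, ∑ l, u i j l * v j k l
      = ∑ i, ∑ j, ∑ l, ∑ k, u i j l * v j k l :=
        Finset.sum_congr rfl fun i _ => Finset.sum_congr rfl fun j _ => Finset.sum_comm
    _ = ∑ i, ∑ j, ∑ l, u i j l * ∑ k, v j k l := by
        refine Finset.sum_congr rfl fun i _ => Finset.sum_congr rfl fun j _ =>
          Finset.sum_congr rfl fun l _ => (Finset.mul_sum _ _ _).symm
    _ = ∑ j, ∑ i, ∑ l, u i j l * ∑ k, v j k l := Finset.sum_comm
    _ = ∑ j, ∑ l, ∑ i, u i j l * ∑ k, v j k l :=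
        Finset.sum_congr rfl fun j _ => Finset.sum_comm
    _ = _ := Finset.sum_congr rfl fun j _ => Finset.sum_congr rfl fun l _ =>
        (Finset.sum_mul _ _ _).symm

/-- The key inequality: for a skew-symmetric `A` with `∑ A_{ik}² = 2`,
the quantity `S = ∑_{jl} ((AᵀA)_{jl})²` is at most `2`. -/
private lemma key (A : Matrix (Fin m) (Fin m) ℝ) (hA : Aᵀ = -A)
    (ht : ∑ i, ∑ k, A i k ^ 2 = 2) :
    ∑ j, ∑ l, (∑ i, A i j * A i l) ^ 2 ≤ 2 := by
  have hsk : ∀ i j, A j i = -A i j := fun i j => by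
    simpa [Matrix.transpose_apply, Matrix.neg_apply] using congrFun (congrFun hA i) j
  set S := ∑ j, ∑ l, (∑ i, A i j * A i l) ^ 2 with hSdef
  have hS0 : 0 ≤ S := Finset.sum_nonneg fun j _ => Finset.sum_nonneg fun l _ => sq_nonneg _
  -- Cauchy–Schwarz over quadruples
  set f : Fin m × Fin m × Fin m × Fin m → ℝ :=
    fun z => A z.1 z.2.1 * A z.2.2.1 z.2.2.2 with hf
  set g : Fin m × Fin m × Fin m × Fin m → ℝ :=
    fun z => A z.1 z.2.2.1 * A z.2.1 z.2.2.2 - A z.1 z.2.2.2 * A z.2.1 z.2.2.1 with hg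
  have cs := Finset.sum_mul_sq_le_sq_mul_sq Finset.univ f g
  simp only [hf, hg, Fintype.sum_prod_type] at cs
  -- evaluate the three sums
  have hfg : ∑ i, ∑ j, ∑ k, ∑ l,
      (A i j * A k l) * (A i k * A j l - A i l * A j k) = 2 * S := by
    have expand : ∀ i j k l : Fin m,
        (A i j * A k l) * (A i k * A j l - A i l * A j k)
          = (A i j * A i k) * (A k l * A j l) - (A i j * A i l) * (A k l * A j k) := by
      intros; ring
    have hT1 : ∑ i, ∑ j, ∑ k, ∑ l, (A i j * A i k) * (A k l * A j l) = S := by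
      rw [sep4]
      refine Finset.sum_congr rfl fun j _ => Finset.sum_congr rfl fun k _ => ?_
      have h2 : ∑ l, A k l * A j l = ∑ i, A i j * A i k :=
        Finset.sum_congr rfl fun l _ => by rw [hsk l k, hsk l j]; ring
      rw [h2, ← sq]
    have hT2 : ∑ i, ∑ j, ∑ k, ∑ l, (A i j * A i l) * (A k l * A j k) = -S := by
      rw [sep5]
      have : ∀ j l : Fin m, (∑ i, A i j * A i l) * (∑ k, A k l * A j k)
          = -((∑ i, A i j * A i l) ^ 2) := by
        intro j l
        have h2 : ∑ k, A k l * A j k = -∑ i, A i j * A i l := by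
          rw [← Finset.sum_neg_distrib]
          exact Finset.sum_congr rfl fun k _ => by rw [hsk k j]; ring
        rw [h2]; ring
      simp only [this, Finset.sum_neg_distrib, hSdef]
    calc ∑ i, ∑ j, ∑ k, ∑ l, (A i j * A k l) * (A i k * A j l - A i l * A j k)
        = ∑ i, ∑ j, ∑ k, ∑ l,
            ((A i j * A i k) * (A k l * A j l) - (A i j * A i l) * (A k l * A j k)) := by
          simp_rw [expand]
      _ = (∑ i, ∑ j, ∑ k, ∑ l, (A i j * A i k) * (A k l * A j l))
            - ∑ i, ∑ j, ∑ k, ∑ l, (A i j * A i l) * (A k l * A j k) := by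
          simp only [Finset.sum_sub_distrib]
      _ = S - (-S) := by rw [hT1, hT2]
      _ = 2 * S := by ring
  have hf2 : ∑ i, ∑ j, ∑ k, ∑ l, (A i j * A k l) ^ 2 = 4 := by
    have : ∀ i j k l : Fin m, (A i j * A k l) ^ 2 = A i j ^ 2 * A k l ^ 2 := by
      intros; ring
    simp_rw [this]
    rw [sep0, ht]; norm_num
  have hg2 : ∑ i, ∑ j, ∑ k, ∑ l, (A i k * A j l - A i l * A j k) ^ 2 = 8 - 2 * S := by
    have expand : ∀ i j k l : Fin m, (A i k * A j l - A i l * A j k) ^ 2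
        = A i k ^ 2 * A j l ^ 2 + A i l ^ 2 * A j k ^ 2
          - 2 * ((A i k * A i l) * (A j k * A j l)) := by
      intros; ring
    have e1 : ∑ i, ∑ j, ∑ k, ∑ l, A i k ^ 2 * A j l ^ 2 = 4 := by
      rw [sep1, ht]; norm_num
    have e2 : ∑ i, ∑ j, ∑ k, ∑ l, A i l ^ 2 * A j k ^ 2 = 4 := by
      rw [sep2, ht]; norm_num
    have e3 : ∑ i, ∑ j, ∑ k, ∑ l, (A i k * A i l) * (A j k * A j l) = S := by
      rw [sep3]
      exact Finset.sum_congr rfl fun k _ => Finset.sum_congr rfl fun l _ => (sq _).symm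
    calc ∑ i, ∑ j, ∑ k, ∑ l, (A i k * A j l - A i l * A j k) ^ 2
        = ∑ i, ∑ j, ∑ k, ∑ l,
            (A i k ^ 2 * A j l ^ 2 + A i l ^ 2 * A j k ^ 2
              - 2 * ((A i k * A i l) * (A j k * A j l))) := by simp_rw [expand]
      _ = (∑ i, ∑ j, ∑ k, ∑ l, A i k ^ 2 * A j l ^ 2)
            + (∑ i, ∑ j, ∑ k, ∑ l, A i l ^ 2 * A j k ^ 2)
            - 2 * ∑ i, ∑ j, ∑ k, ∑ l, (A i k * A i l) * (A j k * A j l) := by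
          simp only [Finset.sum_add_distrib, Finset.sum_sub_distrib, ← Finset.mul_sum]
      _ = 4 + 4 - 2 * S := by rw [e1, e2, e3]
      _ = 8 - 2 * S := by ring
  rw [hfg, hf2, hg2] at cs
  nlinarith [cs, hS0]

end aux

/-- If `A` is a real skew-symmetric `m × m` matrix (`m ≥ 2`) with `‖A‖_F² = 2`, then
`‖A² + I‖_F² ≤ m − 2`. -/
theorem frobNorm_sq_add_one_le_of_skew {m : ℕ} (hm : 2 ≤ m)
    (A : Matrix (Fin m) (Fin m) ℝ) (hA : Aᵀ = -A)
    (hnorm : frobNorm A ^ 2 = 2) :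
    frobNorm (A * A + 1) ^ 2 ≤ (m : ℝ) - 2 := by
  have trace_eq : ∀ M : Matrix (Fin m) (Fin m) ℝ,
      Matrix.trace (Mᵀ * M) = ∑ j, ∑ i, M i j * M i j := by
    intro M
    simp [Matrix.trace, Matrix.mul_apply, Matrix.diag, Matrix.transpose_apply]
  have tr_nonneg : ∀ M : Matrix (Fin m) (Fin m) ℝ, 0 ≤ Matrix.trace (Mᵀ * M) := by
    intro M
    rw [trace_eq]
    exact Finset.sum_nonneg fun j _ => Finset.sum_nonneg fun i _ => mul_self_nonneg _
  have hfrob : ∀ M : Matrix (Fin m) (Fin m) ℝ,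
      frobNorm M ^ 2 = Matrix.trace (Mᵀ * M) := fun M => Real.sq_sqrt (tr_nonneg M)
  have ht2 : Matrix.trace (Aᵀ * A) = 2 := by rw [← hfrob]; exact hnorm
  have ht : ∑ i, ∑ k, A i k ^ 2 = 2 := by
    calc ∑ i, ∑ k, A i k ^ 2 = ∑ k, ∑ i, A i k ^ 2 := Finset.sum_comm
      _ = ∑ k, ∑ i, A i k * A i k :=
          Finset.sum_congr rfl fun k _ => Finset.sum_congr rfl fun i _ => sq (A i k)
      _ = 2 := by rw [← trace_eq A]; exact ht2
  have hS := key A hA ht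
  -- rewrite the goal
  rw [hfrob]
  have hsymm : (A * A + 1)ᵀ = A * A + 1 := by
    rw [Matrix.transpose_add, Matrix.transpose_mul, hA, Matrix.transpose_one]
    simp [Matrix.neg_mul, Matrix.mul_neg]
  rw [hsymm]
  have hmul : (A * A + 1) * (A * A + 1) = A * A * A * A + (A * A + A * A) + 1 := by
    noncomm_ring
  rw [hmul, Matrix.trace_add, Matrix.trace_add, Matrix.trace_add, Matrix.trace_one]
  have hAAneg : Aᵀ * A = -(A * A) := by rw [hA]; simp [Matrix.neg_mul]
  have hAA : Matrix.trace (A * A) = -2 := by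
    have := ht2
    rw [hAAneg, Matrix.trace_neg] at this
    linarith
  have h4 : Matrix.trace (A * A * A * A) = ∑ j, ∑ l, (∑ i, A i j * A i l) ^ 2 := by
    have hB : A * A * A * A = (Aᵀ * A) * (Aᵀ * A) := by
      rw [hAAneg]; noncomm_ring
    rw [hB]
    simp only [Matrix.trace, Matrix.diag, Matrix.mul_apply, Matrix.transpose_apply]
    refine Finset.sum_congr rfl fun j _ => Finset.sum_congr rfl fun l _ => ?_
    have h1 : ∑ i, A i l * A i j = ∑ i, A i j * A i l :=
      Finset.sum_congr rfl fun i _ => mul_comm _ _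
    rw [h1, ← sq]
  rw [h4, hAA]
  have hcard : ((Fintype.card (Fin m) : ℝ)) = (m : ℝ) := by simp
  rw [hcard]
  linarith
end

section
/- Fix n ≥ 2 and ε > 0. Let V₁ = ℝ^{2n} with its standard inner product, V₂ = ℝ², and let B : V₁ × V₁ → ℝ² be the alternating bilinear map B((x,y),(x',y')) = ( Σ_{j=1}^n (x_j y'_j − y_j x'_j), ε (x₁ x'₂ − x₂ x'₁) ), where (x,y) denotes (x₁,…,xₙ,y₁,…,yₙ). Then the H-type deviation of this step-two Carnot datum satisfies δ ≥ √(1 − 1/n). (This datum models the group G^n_ε.) -/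
open scoped RealInnerProductSpace

noncomputable section

open scoped RealInnerProductSpace

/- ### Auxiliary lemmas -/

section AuxLemmas
variable {ι : Type*} [Fintype ι] [DecidableEq ι]

lemma aux_trace_adj_comp (F : EuclideanSpace ℝ ι →ₗ[ℝ] EuclideanSpace ℝ ι) :
    LinearMap.trace ℝ _ (LinearMap.adjoint F ∘ₗ F)
      = ∑ i : ι, ‖F (EuclideanSpace.single i 1)‖ ^ 2 := by
  rw [LinearMap.trace_eq_matrix_trace ℝ (EuclideanSpace.basisFun ι ℝ).toBasis, Matrix.trace]
  congr 1
  ext i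
  rw [Matrix.diag_apply, LinearMap.toMatrix_apply]
  have h1 : (EuclideanSpace.basisFun ι ℝ).toBasis i = EuclideanSpace.single i 1 := by
    simp [EuclideanSpace.basisFun_apply]
  rw [h1]
  have h2 : ∀ (x : EuclideanSpace ℝ ι) i, (EuclideanSpace.basisFun ι ℝ).toBasis.repr x i = x i :=
    fun _ _ => rfl
  rw [h2]
  have h3 : (LinearMap.adjoint F ∘ₗ F) (EuclideanSpace.single i 1) i
      = ⟪LinearMap.adjoint F (F (EuclideanSpace.single i 1)), EuclideanSpace.single i 1⟫ := by
    rw [EuclideanSpace.inner_single_right]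
    simp [LinearMap.comp_apply]
  rw [h3, LinearMap.adjoint_inner_left, real_inner_self_eq_norm_sq]

lemma aux_hsNorm_eq (F : EuclideanSpace ℝ ι →ₗ[ℝ] EuclideanSpace ℝ ι) :
    hsNorm F = Real.sqrt (∑ i : ι, ‖F (EuclideanSpace.single i 1)‖ ^ 2) := by
  rw [hsNorm, aux_trace_adj_comp]

lemma aux_abs_coord (x : EuclideanSpace ℝ ι) (i : ι) : |x i| ≤ ‖x‖ := by
  have h : x i = ⟪x, EuclideanSpace.single i 1⟫ := by
    rw [EuclideanSpace.inner_single_right]; simp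
  rw [h]
  calc |⟪x, EuclideanSpace.single i 1⟫| ≤ ‖x‖ * ‖EuclideanSpace.single i (1:ℝ)‖ :=
        abs_real_inner_le_norm _ _
    _ = ‖x‖ := by rw [EuclideanSpace.norm_single]; simp

lemma aux_gcs {V₂ : Type*} [AddCommGroup V₂] [Module ℝ V₂]
    {g : V₂ →ₗ[ℝ] V₂ →ₗ[ℝ] ℝ} (hg : IsInnerProd g) {T : V₂} (hT : g T T = 1) (s : V₂) :
    (g s T) ^ 2 ≤ g s s := by
  have hexp : g (s - (g s T) • T) (s - (g s T) • T) = g s s - (g s T) ^ 2 := by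
    simp only [map_sub, map_smul, LinearMap.sub_apply, LinearMap.smul_apply, smul_eq_mul]
    rw [hg.symm T s, hT]
    ring
  by_cases hv : s - (g s T) • T = 0
  · rw [hv] at hexp
    simp only [map_zero, LinearMap.zero_apply] at hexp
    linarith
  · have := hg.posdef _ hv
    rw [hexp] at this
    linarith

/-- A J-operator associated to any bracket and any candidate vertical form,
via the Riesz representation. -/
def mkJ {V₁ : Type*} [NormedAddCommGroup V₁] [InnerProductSpace ℝ V₁] [FiniteDimensional ℝ V₁]
    {V₂ : Type*} [AddCommGroup V₂] [Module ℝ V₂]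
    (B : V₁ →ₗ[ℝ] V₁ →ₗ[ℝ] V₂) (g : V₂ →ₗ[ℝ] V₂ →ₗ[ℝ] ℝ) : V₂ → V₁ →ₗ[ℝ] V₁ :=
  fun T =>
  { toFun := fun U => (InnerProductSpace.toDual ℝ V₁).symm
      (LinearMap.toContinuousLinearMap ((g.flip T) ∘ₗ (B U)))
    map_add' := by
      intro x y
      rw [map_add, LinearMap.comp_add, map_add, map_add]
    map_smul' := by
      intro c x
      rw [map_smul, LinearMap.comp_smul, map_smul, map_smul]
      rfl }

lemma mkJ_inner {V₁ : Type*} [NormedAddCommGroup V₁] [InnerProductSpace ℝ V₁]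
    [FiniteDimensional ℝ V₁] {V₂ : Type*} [AddCommGroup V₂] [Module ℝ V₂]
    (B : V₁ →ₗ[ℝ] V₁ →ₗ[ℝ] V₂) (g : V₂ →ₗ[ℝ] V₂ →ₗ[ℝ] ℝ)
    (T : V₂) (U V : V₁) : ⟪mkJ B g T U, V⟫ = g (B U V) T := by
  show ⟪(InnerProductSpace.toDual ℝ V₁).symm _, V⟫ = _
  rw [InnerProductSpace.toDual_symm_apply]
  simp [LinearMap.coe_toContinuousLinearMap']

/-- The standard inner product on `ℝ × ℝ`. -/
def g0 : (ℝ × ℝ) →ₗ[ℝ] (ℝ × ℝ) →ₗ[ℝ] ℝ :=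
  LinearMap.mk₂ ℝ (fun s t => s.1 * t.1 + s.2 * t.2)
    (by intros; simp [Prod.fst_add, Prod.snd_add]; ring)
    (by intros; simp [Prod.smul_fst, Prod.smul_snd, smul_eq_mul]; ring)
    (by intros; simp [Prod.fst_add, Prod.snd_add]; ring)
    (by intros; simp [Prod.smul_fst, Prod.smul_snd, smul_eq_mul]; ring)

lemma g0_isInnerProd : IsInnerProd g0 := by
  constructor
  · intro s t; simp [g0]; ring
  · intro t ht
    have h1 : t.1 ≠ 0 ∨ t.2 ≠ 0 := by
      by_contra h; push_neg at h
      exact ht (Prod.ext h.1 h.2)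
    simp only [g0, LinearMap.mk₂_apply]
    rcases h1 with h | h
    · nlinarith [mul_self_nonneg t.2, mul_self_pos.mpr h]
    · nlinarith [mul_self_nonneg t.1, mul_self_pos.mpr h]

end AuxLemmas

set_option maxHeartbeats 1000000 in
/-- H-type deviation lower bound for the group `G^n_ε` (`n ≥ 2`, `ε > 0`):
`V₁ = ℝ^{2n}`, `V₂ = ℝ²`, with bracket
`B((x,y),(x',y')) = (Σⱼ (xⱼ y'ⱼ − yⱼ x'ⱼ), ε (x₁ x'₂ − x₂ x'₁))`.
Then `δ ≥ √(1 − 1/n)`. -/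
theorem htypeDeviation_G_eps_lower_bound
    (n : ℕ) (hn : 2 ≤ n) (ε : ℝ) (hε : 0 < ε)
    (B : EuclideanSpace ℝ (Fin n ⊕ Fin n) →ₗ[ℝ]
      EuclideanSpace ℝ (Fin n ⊕ Fin n) →ₗ[ℝ] (ℝ × ℝ))
    (hB : ∀ u v : EuclideanSpace ℝ (Fin n ⊕ Fin n),
      B u v =
        (∑ j : Fin n, (u (Sum.inl j) * v (Sum.inr j) - u (Sum.inr j) * v (Sum.inl j)),
         ε * (u (Sum.inl ⟨0, by omega⟩) * v (Sum.inl ⟨1, by omega⟩)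
              - u (Sum.inl ⟨1, by omega⟩) * v (Sum.inl ⟨0, by omega⟩)))) :
    Real.sqrt (1 - 1 / (n : ℝ)) ≤ htypeDeviation B := by
  classical
  have hn' : (2:ℝ) ≤ (n:ℝ) := by exact_mod_cast hn
  have hnpos : (0:ℝ) < n := by linarith
  set i0 : Fin n := ⟨0, by omega⟩ with hi0
  set i1 : Fin n := ⟨1, by omega⟩ with hi1
  -- Nonemptiness of the defining set
  have hne : { d : ℝ | ∃ (g : (ℝ×ℝ) →ₗ[ℝ] (ℝ×ℝ) →ₗ[ℝ] ℝ)
      (J : (ℝ×ℝ) → EuclideanSpace ℝ (Fin n ⊕ Fin n) →ₗ[ℝ] EuclideanSpace ℝ (Fin n ⊕ Fin n)),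
      IsInnerProd g ∧ IsJOp B g J ∧ d = deltaOf g J }.Nonempty :=
    ⟨deltaOf g0 (mkJ B g0), g0, mkJ B g0, g0_isInnerProd,
      fun T U V => mkJ_inner B g0 T U V, rfl⟩
  rw [htypeDeviation]
  refine le_csInf hne ?_
  rintro d ⟨g, J, hg, hJ, rfl⟩
  -- basic facts about g
  have gdec : ∀ (s T : ℝ × ℝ), g s T = s.1 * g (1,0) T + s.2 * g (0,1) T := by
    intro s T
    have hs : s = s.1 • ((1:ℝ),(0:ℝ)) + s.2 • ((0:ℝ),(1:ℝ)) := by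
      ext <;> simp
    conv_lhs => rw [hs]
    rw [map_add, map_smul, map_smul, LinearMap.add_apply, LinearMap.smul_apply,
      LinearMap.smul_apply, smul_eq_mul, smul_eq_mul]
  have hA : 0 < g (1,0) (1,0) := hg.posdef _ (by simp [Prod.ext_iff])
  have hB2 : 0 < g (0,1) (0,1) := hg.posdef _ (by simp [Prod.ext_iff])
  set M : ℝ := 2*(n:ℝ)*Real.sqrt (g (1,0) (1,0)) + 2*ε*Real.sqrt (g (0,1) (0,1)) with hM
  have hM0 : 0 ≤ M := by
    have := Real.sqrt_nonneg (g (1,0) (1,0))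
    have := Real.sqrt_nonneg (g (0,1) (0,1))
    positivity
  -- bounds on the components of B
  have hb1 : ∀ U V : EuclideanSpace ℝ (Fin n ⊕ Fin n),
      |(B U V).1| ≤ 2*(n:ℝ)*(‖U‖*‖V‖) := by
    intro U V
    rw [hB]
    calc |∑ j : Fin n, (U (Sum.inl j) * V (Sum.inr j) - U (Sum.inr j) * V (Sum.inl j))|
        ≤ ∑ j : Fin n, |U (Sum.inl j) * V (Sum.inr j) - U (Sum.inr j) * V (Sum.inl j)| :=
          Finset.abs_sum_le_sum_abs _ _
      _ ≤ ∑ _j : Fin n, 2*(‖U‖*‖V‖) := by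
          refine Finset.sum_le_sum fun j _ => ?_
          calc |U (Sum.inl j) * V (Sum.inr j) - U (Sum.inr j) * V (Sum.inl j)|
              ≤ |U (Sum.inl j) * V (Sum.inr j)| + |U (Sum.inr j) * V (Sum.inl j)| := abs_sub _ _
            _ = |U (Sum.inl j)| * |V (Sum.inr j)| + |U (Sum.inr j)| * |V (Sum.inl j)| := by
                rw [abs_mul, abs_mul]
            _ ≤ ‖U‖*‖V‖ + ‖U‖*‖V‖ := by
                refine add_le_add (mul_le_mul (aux_abs_coord U _) (aux_abs_coord V _)
                  (abs_nonneg _) (norm_nonneg _)) (mul_le_mul (aux_abs_coord U _)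
                  (aux_abs_coord V _) (abs_nonneg _) (norm_nonneg _))
            _ = 2*(‖U‖*‖V‖) := by ring
      _ = 2*(n:ℝ)*(‖U‖*‖V‖) := by
          rw [Finset.sum_const, Finset.card_univ, Fintype.card_fin, nsmul_eq_mul]
          ring
  have hb2 : ∀ U V : EuclideanSpace ℝ (Fin n ⊕ Fin n),
      |(B U V).2| ≤ 2*ε*(‖U‖*‖V‖) := by
    intro U V
    rw [hB]
    show |ε * _| ≤ _
    rw [abs_mul, abs_of_pos hε]
    have h : |U (Sum.inl i0) * V (Sum.inl i1) - U (Sum.inl i1) * V (Sum.inl i0)|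
        ≤ 2*(‖U‖*‖V‖) := by
      calc |U (Sum.inl i0) * V (Sum.inl i1) - U (Sum.inl i1) * V (Sum.inl i0)|
          ≤ |U (Sum.inl i0) * V (Sum.inl i1)| + |U (Sum.inl i1) * V (Sum.inl i0)| := abs_sub _ _
        _ = |U (Sum.inl i0)| * |V (Sum.inl i1)| + |U (Sum.inl i1)| * |V (Sum.inl i0)| := by
            rw [abs_mul, abs_mul]
        _ ≤ ‖U‖*‖V‖ + ‖U‖*‖V‖ := by
            refine add_le_add (mul_le_mul (aux_abs_coord U _) (aux_abs_coord V _)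
              (abs_nonneg _) (norm_nonneg _)) (mul_le_mul (aux_abs_coord U _)
              (aux_abs_coord V _) (abs_nonneg _) (norm_nonneg _))
        _ = 2*(‖U‖*‖V‖) := by ring
    calc ε * |U (Sum.inl i0) * V (Sum.inl i1) - U (Sum.inl i1) * V (Sum.inl i0)|
        ≤ ε * (2*(‖U‖*‖V‖)) := by
          exact mul_le_mul_of_nonneg_left h hε.le
      _ = 2*ε*(‖U‖*‖V‖) := by ring
  -- uniform operator bound for J on the unit sphere of g
  have opb : ∀ T : ℝ × ℝ, gnorm g T = 1 → ∀ U, ‖J T U‖ ≤ M * ‖U‖ := by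
    intro T hT U
    have hTT : g T T = 1 := Real.sqrt_eq_one.mp hT
    have hα : |g (1,0) T| ≤ Real.sqrt (g (1,0) (1,0)) := by
      rw [← Real.sqrt_sq_eq_abs]
      exact Real.sqrt_le_sqrt (aux_gcs hg hTT _)
    have hβ : |g (0,1) T| ≤ Real.sqrt (g (0,1) (0,1)) := by
      rw [← Real.sqrt_sq_eq_abs]
      exact Real.sqrt_le_sqrt (aux_gcs hg hTT _)
    have key : ∀ V, |⟪J T U, V⟫| ≤ M * ‖U‖ * ‖V‖ := by
      intro V
      rw [hJ, gdec]
      calc |(B U V).1 * g (1,0) T + (B U V).2 * g (0,1) T|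
          ≤ |(B U V).1| * |g (1,0) T| + |(B U V).2| * |g (0,1) T| := by
            refine (abs_add_le _ _).trans ?_
            rw [abs_mul, abs_mul]
        _ ≤ (2*(n:ℝ)*(‖U‖*‖V‖)) * Real.sqrt (g (1,0) (1,0))
              + (2*ε*(‖U‖*‖V‖)) * Real.sqrt (g (0,1) (0,1)) := by
            refine add_le_add (mul_le_mul (hb1 U V) hα (abs_nonneg _) ?_)
              (mul_le_mul (hb2 U V) hβ (abs_nonneg _) ?_)
            · positivity
            · positivity
        _ = M * ‖U‖ * ‖V‖ := by rw [hM]; ring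
    have h2 := key (J T U)
    have hx : |⟪J T U, J T U⟫| = ‖J T U‖^2 := by
      rw [real_inner_self_eq_norm_sq, abs_of_nonneg (by positivity)]
    rw [hx] at h2
    rcases eq_or_lt_of_le (norm_nonneg (J T U)) with h0 | h0
    · rw [← h0]; positivity
    · nlinarith
  -- bounded above
  have hbdd : BddAbove ((fun T => hsNorm (J T ∘ₗ J T + LinearMap.id)) ''
      {T : ℝ × ℝ | gnorm g T = 1}) := by
    refine ⟨Real.sqrt (2*(n:ℝ)) * (M^2+1), ?_⟩
    rintro y ⟨T, hT, rfl⟩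
    show hsNorm (J T ∘ₗ J T + LinearMap.id) ≤ _
    rw [aux_hsNorm_eq]
    simp only [LinearMap.add_apply, LinearMap.comp_apply, LinearMap.id_apply]
    have hterm : ∀ i : Fin n ⊕ Fin n,
        ‖J T (J T (EuclideanSpace.single i (1:ℝ))) + EuclideanSpace.single i (1:ℝ)‖^2
          ≤ (M^2+1)^2 := by
      intro i
      have h1 : ‖J T (J T (EuclideanSpace.single i (1:ℝ))) + EuclideanSpace.single i (1:ℝ)‖
          ≤ M^2 + 1 := by
        calc ‖J T (J T (EuclideanSpace.single i (1:ℝ))) + EuclideanSpace.single i (1:ℝ)‖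
            ≤ ‖J T (J T (EuclideanSpace.single i (1:ℝ)))‖ + ‖EuclideanSpace.single i (1:ℝ)‖ :=
              norm_add_le _ _
          _ ≤ M * (M * ‖EuclideanSpace.single i (1:ℝ)‖) + ‖EuclideanSpace.single i (1:ℝ)‖ := by
              refine add_le_add ((opb T hT _).trans ?_) le_rfl
              exact mul_le_mul_of_nonneg_left (opb T hT _) hM0
          _ = M^2 + 1 := by
              rw [EuclideanSpace.norm_single]
              simp
              ring
      exact pow_le_pow_left₀ (norm_nonneg _) h1 2
    refine le_trans (Real.sqrt_le_sqrt (Finset.sum_le_sum fun i _ => hterm i)) (le_of_eq ?_)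
    have hsum : (∑ _i : Fin n ⊕ Fin n, (M^2+1)^2) = (2*(n:ℝ)) * (M^2+1)^2 := by
      rw [Finset.sum_const, Finset.card_univ, nsmul_eq_mul]
      congr 1
      simp only [Fintype.card_sum, Fintype.card_fin]
      push_cast
      ring
    rw [hsum, Real.sqrt_mul (by positivity), Real.sqrt_sq (by positivity)]
  -- the special direction T1
  set T0 : ℝ × ℝ := (-(g (1,0) (0,1)), g (1,0) (1,0)) with hT0
  have hT0dec : T0 = (-(g (1,0) (0,1))) • ((1:ℝ),(0:ℝ)) + (g (1,0) (1,0)) • ((0:ℝ),(1:ℝ)) := by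
    ext <;> simp [hT0]
  have h10 : g (1,0) T0 = 0 := by
    rw [hT0dec, map_add, map_smul, map_smul, smul_eq_mul, smul_eq_mul]
    ring
  have hT0ne : T0 ≠ 0 := by
    intro h
    rw [Prod.ext_iff] at h
    have h2 := h.2
    simp only [hT0, Prod.snd_zero] at h2
    exact absurd h2 (ne_of_gt hA)
  have hr : 0 < g T0 T0 := hg.posdef _ hT0ne
  set T1 : ℝ × ℝ := (Real.sqrt (g T0 T0))⁻¹ • T0 with hT1
  have hT1T1 : g T1 T1 = 1 := by
    have hx : g T1 T1 = (Real.sqrt (g T0 T0))⁻¹ * ((Real.sqrt (g T0 T0))⁻¹ * g T0 T0) := by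
      simp only [hT1, map_smul, LinearMap.smul_apply, smul_eq_mul]
    rw [hx, ← mul_assoc, ← mul_inv, Real.mul_self_sqrt hr.le]
    exact inv_mul_cancel₀ hr.ne'
  have hT1sph : gnorm g T1 = 1 := by rw [gnorm, hT1T1, Real.sqrt_one]
  have h10T1 : g (1,0) T1 = 0 := by
    rw [hT1, map_smul, smul_eq_mul, h10, mul_zero]
  -- J T1 kills most basis vectors
  have hzero : ∀ i : Fin n ⊕ Fin n, i ≠ Sum.inl i0 → i ≠ Sum.inl i1 →
      J T1 (EuclideanSpace.single i (1:ℝ)) = 0 := by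
    intro i h0 h1
    have hinner : ∀ V, ⟪J T1 (EuclideanSpace.single i (1:ℝ)), V⟫ = 0 := by
      intro V
      rw [hJ, gdec, h10T1, mul_zero, zero_add]
      have hc2 : (B (EuclideanSpace.single i (1:ℝ)) V).2 = 0 := by
        rw [hB]
        show ε * _ = 0
        rw [EuclideanSpace.single_apply, EuclideanSpace.single_apply,
          if_neg (Ne.symm h0), if_neg (Ne.symm h1)]
        ring
      rw [hc2, zero_mul]
    have := hinner (J T1 (EuclideanSpace.single i (1:ℝ)))
    exact inner_self_eq_zero.mp this
  -- lower bound on the HS norm at T1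
  have hKlow : Real.sqrt (2*(n:ℝ) - 2) ≤ hsNorm (J T1 ∘ₗ J T1 + LinearMap.id) := by
    rw [aux_hsNorm_eq]
    apply Real.sqrt_le_sqrt
    simp only [LinearMap.add_apply, LinearMap.comp_apply, LinearMap.id_apply]
    have hsub : (Finset.univ \ {Sum.inl i0, Sum.inl i1} : Finset (Fin n ⊕ Fin n)) ⊆
        Finset.univ := Finset.subset_univ _
    have hcard : ((Finset.univ \ {Sum.inl i0, Sum.inl i1} :
        Finset (Fin n ⊕ Fin n)).card : ℝ) = 2*(n:ℝ) - 2 := by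
      rw [Finset.card_sdiff_of_subset (by intro x _; exact Finset.mem_univ x)]
      have hpair : ({Sum.inl i0, Sum.inl i1} : Finset (Fin n ⊕ Fin n)).card = 2 := by
        rw [Finset.card_insert_of_notMem (by simp [hi0, hi1, Fin.ext_iff]),
          Finset.card_singleton]
      rw [hpair, Finset.card_univ]
      have hcards : Fintype.card (Fin n ⊕ Fin n) = n + n := by
        simp [Fintype.card_sum]
      rw [hcards]
      have h2n : 2 ≤ n + n := by omega
      push_cast [Nat.cast_sub h2n]
      ring
    calc 2*(n:ℝ) - 2
        = ∑ _i ∈ (Finset.univ \ {Sum.inl i0, Sum.inl i1} : Finset (Fin n ⊕ Fin n)), (1:ℝ) := by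
          rw [Finset.sum_const, nsmul_eq_mul, mul_one, hcard]
      _ = ∑ i ∈ (Finset.univ \ {Sum.inl i0, Sum.inl i1} : Finset (Fin n ⊕ Fin n)),
            ‖J T1 (J T1 (EuclideanSpace.single i (1:ℝ))) + EuclideanSpace.single i (1:ℝ)‖^2 := by
          refine Finset.sum_congr rfl fun i hi => ?_
          rw [Finset.mem_sdiff, Finset.mem_insert, Finset.mem_singleton] at hi
          push_neg at hi
          rw [hzero i hi.2.1 hi.2.2, map_zero, zero_add, EuclideanSpace.norm_single]
          simp
      _ ≤ ∑ i : Fin n ⊕ Fin n,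
            ‖J T1 (J T1 (EuclideanSpace.single i (1:ℝ))) + EuclideanSpace.single i (1:ℝ)‖^2 :=
          Finset.sum_le_sum_of_subset_of_nonneg hsub (fun i _ _ => pow_nonneg (norm_nonneg _) 2)
  -- conclude
  have hmem : hsNorm (J T1 ∘ₗ J T1 + LinearMap.id) ∈
      ((fun T => hsNorm (J T ∘ₗ J T + LinearMap.id)) '' {T : ℝ × ℝ | gnorm g T = 1}) :=
    ⟨T1, hT1sph, rfl⟩
  have hsup : Real.sqrt (2*(n:ℝ) - 2) ≤
      sSup ((fun T => hsNorm (J T ∘ₗ J T + LinearMap.id)) '' {T : ℝ × ℝ | gnorm g T = 1}) :=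
    hKlow.trans (le_csSup hbdd hmem)
  rw [deltaOf]
  have hfr : ((Module.finrank ℝ (EuclideanSpace ℝ (Fin n ⊕ Fin n))) : ℝ) = 2*(n:ℝ) := by
    rw [finrank_euclideanSpace]
    simp only [Fintype.card_sum, Fintype.card_fin]
    push_cast
    ring
  rw [hfr]
  have hkey : Real.sqrt (1 - 1/(n:ℝ)) = (Real.sqrt (2*(n:ℝ)))⁻¹ * Real.sqrt (2*(n:ℝ) - 2) := by
    rw [← Real.sqrt_inv, ← Real.sqrt_mul (by positivity)]
    congr 1
    field_simp
  rw [hkey]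
  exact mul_le_mul_of_nonneg_left hsup (by positivity)

end
end
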